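/- arXiv:1910.11325 — 10 statements merged into one kernel-verified Lean document; each statement's English description precedes it below -/
import Mathlib

section
/- Let a, c ∈ ℝ^n, b, d ∈ ℝ^m, and M, N ∈ ℝ^{m×n}. Suppose there exist entrywise nonnegative matrices Y ∈ ℝ^{m×m}, Z ∈ ℝ^{n×n} with aᵀZ ≤ cᵀ entrywise, MZ ≤ YN entrywise, Yd ≤ b entrywise, and also entrywise nonnegative matrices Y' ∈ ℝ^{m×m}, Z' ∈ ℝ^{n×n} with cᵀZ' ≤ aᵀ entrywise, NZ' ≤ Y'M entrywise, Y'b ≤ d entrywise. Then sInf { aᵀx : x ∈ ℝ^n, x ≥ 0, Mx ≤ b } = sInf { cᵀx : x ∈ ℝ^n, x ≥ 0, Nx ≤ d }. -/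
open Matrix

/-- Feasibility/value transfer along a reduction. -/
lemma transfer_aux {m n : ℕ} (a c : Fin n → ℝ) (b d : Fin m → ℝ)
    (M N : Matrix (Fin m) (Fin n) ℝ)
    (Y : Matrix (Fin m) (Fin m) ℝ) (Z : Matrix (Fin n) (Fin n) ℝ)
    (hY : ∀ i j, 0 ≤ Y i j) (hZ : ∀ i j, 0 ≤ Z i j)
    (haZ : ∀ j, Matrix.vecMul a Z j ≤ c j)
    (hMZ : ∀ i j, (M * Z) i j ≤ (Y * N) i j)
    (hYd : ∀ i, Y.mulVec d i ≤ b i) :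
    ∀ r ∈ {r : ℝ | ∃ x : Fin n → ℝ, (∀ i, 0 ≤ x i) ∧ (∀ i, N.mulVec x i ≤ d i) ∧ r = c ⬝ᵥ x},
      ∃ r' ∈ {r : ℝ | ∃ x : Fin n → ℝ, (∀ i, 0 ≤ x i) ∧ (∀ i, M.mulVec x i ≤ b i) ∧ r = a ⬝ᵥ x},
        r' ≤ r := by
  rintro r ⟨x, hx0, hxN, rfl⟩
  refine ⟨a ⬝ᵥ Z.mulVec x, ⟨Z.mulVec x, ?_, ?_, rfl⟩, ?_⟩
  · intro i
    simp only [Matrix.mulVec, dotProduct]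
    exact Finset.sum_nonneg fun j _ => mul_nonneg (hZ i j) (hx0 j)
  · intro i
    have h1 : M.mulVec (Z.mulVec x) i = (M * Z).mulVec x i := by
      rw [Matrix.mulVec_mulVec]
    have h2 : (M * Z).mulVec x i ≤ (Y * N).mulVec x i := by
      simp only [Matrix.mulVec, dotProduct]
      exact Finset.sum_le_sum fun j _ => mul_le_mul_of_nonneg_right (hMZ i j) (hx0 j)
    have h3 : (Y * N).mulVec x i = Y.mulVec (N.mulVec x) i := by
      rw [Matrix.mulVec_mulVec]
    have h4 : Y.mulVec (N.mulVec x) i ≤ Y.mulVec d i := by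
      simp only [Matrix.mulVec, dotProduct]
      exact Finset.sum_le_sum fun j _ => mul_le_mul_of_nonneg_left (hxN j) (hY i j)
    calc M.mulVec (Z.mulVec x) i = (M * Z).mulVec x i := h1
      _ ≤ (Y * N).mulVec x i := h2
      _ = Y.mulVec (N.mulVec x) i := h3
      _ ≤ Y.mulVec d i := h4
      _ ≤ b i := hYd i
  · have : a ⬝ᵥ Z.mulVec x = Matrix.vecMul a Z ⬝ᵥ x := (Matrix.dotProduct_mulVec a Z x)
    rw [this]
    simp only [dotProduct]
    exact Finset.sum_le_sum fun j _ => mul_le_mul_of_nonneg_right (haZ j) (hx0 j)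

lemma sInf_eq_of_mutual_dom (S T : Set ℝ)
    (hST : ∀ r ∈ T, ∃ r' ∈ S, r' ≤ r)
    (hTS : ∀ r ∈ S, ∃ r' ∈ T, r' ≤ r) : sInf S = sInf T := by
  rcases S.eq_empty_or_nonempty with hS | hS
  · rcases T.eq_empty_or_nonempty with hT | hT
    · rw [hS, hT]
    · obtain ⟨r, hr⟩ := hT
      obtain ⟨r', hr', _⟩ := hST r hr
      rw [hS] at hr'; exact absurd hr' (Set.notMem_empty r')
  · obtain ⟨s, hs⟩ := hS
    obtain ⟨t, ht, _⟩ := hTS s hs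
    by_cases hb : BddBelow S
    · have hbT : BddBelow T := by
        obtain ⟨B, hB⟩ := hb
        exact ⟨B, fun r hr => by
          obtain ⟨r', hr', hle⟩ := hST r hr
          exact le_trans (hB hr') hle⟩
      apply le_antisymm
      · apply le_csInf ⟨t, ht⟩
        intro r hr
        obtain ⟨r', hr', hle⟩ := hST r hr
        exact le_trans (csInf_le hb hr') hle
      · apply le_csInf ⟨s, hs⟩
        intro r hr
        obtain ⟨r', hr', hle⟩ := hTS r hr
        exact le_trans (csInf_le hbT hr') hle
    · have hbT : ¬ BddBelow T := by
        intro ⟨B, hB⟩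
        exact hb ⟨B, fun r hr => by
          obtain ⟨r', hr', hle⟩ := hTS r hr
          exact le_trans (hB hr') hle⟩
      rw [Real.sInf_of_not_bddBelow hb, Real.sInf_of_not_bddBelow hbT]

theorem stmt2 {m n : ℕ} (a c : Fin n → ℝ) (b d : Fin m → ℝ)
    (M N : Matrix (Fin m) (Fin n) ℝ)
    (Y : Matrix (Fin m) (Fin m) ℝ) (Z : Matrix (Fin n) (Fin n) ℝ)
    (hY : ∀ i j, 0 ≤ Y i j) (hZ : ∀ i j, 0 ≤ Z i j)
    (haZ : ∀ j, Matrix.vecMul a Z j ≤ c j)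
    (hMZ : ∀ i j, (M * Z) i j ≤ (Y * N) i j)
    (hYd : ∀ i, Y.mulVec d i ≤ b i)
    (Y' : Matrix (Fin m) (Fin m) ℝ) (Z' : Matrix (Fin n) (Fin n) ℝ)
    (hY' : ∀ i j, 0 ≤ Y' i j) (hZ' : ∀ i j, 0 ≤ Z' i j)
    (hcZ' : ∀ j, Matrix.vecMul c Z' j ≤ a j)
    (hNZ' : ∀ i j, (N * Z') i j ≤ (Y' * M) i j)
    (hY'b : ∀ i, Y'.mulVec b i ≤ d i) :
    sInf {r : ℝ | ∃ x : Fin n → ℝ, (∀ i, 0 ≤ x i) ∧ (∀ i, M.mulVec x i ≤ b i) ∧ r = a ⬝ᵥ x} =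
      sInf {r : ℝ | ∃ x : Fin n → ℝ, (∀ i, 0 ≤ x i) ∧ (∀ i, N.mulVec x i ≤ d i) ∧ r = c ⬝ᵥ x} := by
  exact sInf_eq_of_mutual_dom _ _
    (transfer_aux a c b d M N Y Z hY hZ haZ hMZ hYd)
    (transfer_aux c a d b N M Y' Z' hY' hZ' hcZ' hNZ' hY'b)
end

section
/- Let M, N ∈ ℝ^{m×n} be fractionally isomorphic matrices, i.e., there exist doubly stochastic matrices Y ∈ ℝ^{m×m} and Z ∈ ℝ^{n×n} with MZ = YN and NZᵀ = YᵀM. Then sSup { 𝟙ₙᵀx : x ∈ ℝ^n, x ≥ 0, Mx ≤ 𝟙ₘ } = sSup { 𝟙ₙᵀx : x ∈ ℝ^n, x ≥ 0, Nx ≤ 𝟙ₘ }, where 𝟙ₖ denotes the k-dimensional all-ones vector. -/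
open Matrix

lemma aux_incl {m n : ℕ} (A B : Matrix (Fin m) (Fin n) ℝ)
    (W : Matrix (Fin m) (Fin m) ℝ) (V : Matrix (Fin n) (Fin n) ℝ)
    (hW0 : ∀ i j, 0 ≤ W i j) (hWrow : ∀ i, ∑ j, W i j = 1)
    (hV0 : ∀ i j, 0 ≤ V i j) (hVcol : ∀ j, ∑ i, V i j = 1)
    (h : A * V = W * B) :
    {r : ℝ | ∃ x : Fin n → ℝ, (∀ i, 0 ≤ x i) ∧ (∀ j, B.mulVec x j ≤ 1) ∧ r = ∑ i, x i} ⊆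
    {r : ℝ | ∃ x : Fin n → ℝ, (∀ i, 0 ≤ x i) ∧ (∀ j, A.mulVec x j ≤ 1) ∧ r = ∑ i, x i} := by
  rintro r ⟨x, hx0, hxB, rfl⟩
  refine ⟨V.mulVec x, ?_, ?_, ?_⟩
  · intro i
    simp only [mulVec, dotProduct]
    exact Finset.sum_nonneg fun k _ => mul_nonneg (hV0 i k) (hx0 k)
  · intro j
    have : A.mulVec (V.mulVec x) = W.mulVec (B.mulVec x) := by
      rw [mulVec_mulVec, mulVec_mulVec, h]
    rw [this]
    calc W.mulVec (B.mulVec x) j = ∑ k, W j k * B.mulVec x k := rfl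
      _ ≤ ∑ k, W j k * 1 :=
          Finset.sum_le_sum fun k _ => mul_le_mul_of_nonneg_left (hxB k) (hW0 j k)
      _ = 1 := by simp [hWrow j]
  · symm
    simp only [mulVec, dotProduct]
    rw [Finset.sum_comm]
    refine Finset.sum_congr rfl fun k _ => ?_
    rw [← Finset.sum_mul, hVcol k, one_mul]

theorem stmt3 {m n : ℕ} (M N : Matrix (Fin m) (Fin n) ℝ)
    (Y : Matrix (Fin m) (Fin m) ℝ) (Z : Matrix (Fin n) (Fin n) ℝ)
    (hY0 : ∀ i j, 0 ≤ Y i j) (hYrow : ∀ i, ∑ j, Y i j = 1) (hYcol : ∀ j, ∑ i, Y i j = 1)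
    (hZ0 : ∀ i j, 0 ≤ Z i j) (hZrow : ∀ i, ∑ j, Z i j = 1) (hZcol : ∀ j, ∑ i, Z i j = 1)
    (h₁ : M * Z = Y * N) (h₂ : N * Zᵀ = Yᵀ * M) :
    sSup {r : ℝ | ∃ x : Fin n → ℝ, (∀ i, 0 ≤ x i) ∧ (∀ j, M.mulVec x j ≤ 1) ∧ r = ∑ i, x i} =
      sSup {r : ℝ | ∃ x : Fin n → ℝ, (∀ i, 0 ≤ x i) ∧ (∀ j, N.mulVec x j ≤ 1) ∧ r = ∑ i, x i} := by
  have h1 := aux_incl M N Y Z hY0 hYrow hZ0 hZcol h₁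
  have h2 := aux_incl N M Yᵀ Zᵀ (fun i j => hY0 j i) (by simpa using hYcol)
    (fun i j => hZ0 j i) (by simpa using hZrow) h₂
  rw [Set.Subset.antisymm h2 h1]
end

section
/- Let S₁ = (S₁ᵢ)_{i<n} and S₂ = (S₂ᵢ)_{i<n} be two families of n subsets of {0,…,m−1} (functions Fin n → Finset (Fin m)), with 0-1 incidence matrices M, N ∈ ℝ^{m×n} given by M j i = 1 if j ∈ S₁ᵢ and 0 otherwise (similarly for N and S₂). If M and N are fractionally isomorphic, then the fractional matching numbers of the two set families are equal: sSup { Σᵢ xᵢ : x : Fin n → ℝ, x ≥ 0, ∀ j, Σ_{i : j ∈ S₁ᵢ} xᵢ ≤ 1 } = sSup { Σᵢ xᵢ : x : Fin n → ℝ, x ≥ 0, ∀ j, Σ_{i : j ∈ S₂ᵢ} xᵢ ≤ 1 }. -/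
open Matrix

lemma feas_subset_aux {m n : ℕ} (S₁ S₂ : Fin n → Finset (Fin m))
    (M N : Matrix (Fin m) (Fin n) ℝ)
    (hM : ∀ j i, M j i = if j ∈ S₁ i then 1 else 0)
    (hN : ∀ j i, N j i = if j ∈ S₂ i then 1 else 0)
    (Y : Matrix (Fin m) (Fin m) ℝ) (W : Matrix (Fin n) (Fin n) ℝ)
    (hY0 : ∀ i j, 0 ≤ Y i j) (hYcol : ∀ j, ∑ i, Y i j = 1)
    (hW0 : ∀ i j, 0 ≤ W i j) (hWrow : ∀ i, ∑ j, W i j = 1)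
    (heq : N * Wᵀ = Yᵀ * M) :
    {r : ℝ | ∃ x : Fin n → ℝ, (∀ i, 0 ≤ x i) ∧
        (∀ j : Fin m, ∑ i ∈ Finset.univ.filter (fun i => j ∈ S₁ i), x i ≤ 1) ∧
        r = ∑ i, x i} ⊆
    {r : ℝ | ∃ x : Fin n → ℝ, (∀ i, 0 ≤ x i) ∧
        (∀ j : Fin m, ∑ i ∈ Finset.univ.filter (fun i => j ∈ S₂ i), x i ≤ 1) ∧
        r = ∑ i, x i} := by
  rintro r ⟨x, hx0, hxc, rfl⟩
  have hfilt : ∀ (S : Fin n → Finset (Fin m)) (A : Matrix (Fin m) (Fin n) ℝ),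
      (∀ j i, A j i = if j ∈ S i then 1 else 0) → ∀ (y : Fin n → ℝ) (j : Fin m),
      ∑ i ∈ Finset.univ.filter (fun i => j ∈ S i), y i = ∑ i, A j i * y i := by
    intro S A hA y j
    rw [Finset.sum_filter]
    refine Finset.sum_congr rfl fun i _ => ?_
    rw [hA]; split <;> simp
  refine ⟨fun i => ∑ k, W k i * x k,
    fun i => Finset.sum_nonneg fun k _ => mul_nonneg (hW0 k i) (hx0 k), ?_, ?_⟩
  · intro j
    rw [hfilt S₂ N hN]
    have key : ∑ i, N j i * ∑ k, W k i * x k = ∑ l, Y l j * ∑ k, M l k * x k := by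
      have h1 : ∀ k, (N * Wᵀ) j k = (Yᵀ * M) j k := fun k => by rw [heq]
      calc ∑ i, N j i * ∑ k, W k i * x k
          = ∑ i, ∑ k, N j i * W k i * x k := by
            simp [Finset.mul_sum, mul_assoc]
        _ = ∑ k, (∑ i, N j i * W k i) * x k := by
            rw [Finset.sum_comm]; simp [Finset.sum_mul]
        _ = ∑ k, (∑ l, Y l j * M l k) * x k := by
            refine Finset.sum_congr rfl fun k _ => ?_
            have := h1 k
            simp only [Matrix.mul_apply, Matrix.transpose_apply] at this
            rw [this]
        _ = ∑ l, Y l j * ∑ k, M l k * x k := by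
            simp only [Finset.sum_mul]
            rw [Finset.sum_comm]
            simp [Finset.mul_sum, mul_assoc]
    rw [key]
    calc ∑ l, Y l j * ∑ k, M l k * x k
        ≤ ∑ l, Y l j * 1 := by
          refine Finset.sum_le_sum fun l _ => ?_
          refine mul_le_mul_of_nonneg_left ?_ (hY0 l j)
          rw [← hfilt S₁ M hM]
          exact hxc l
      _ = 1 := by simp [hYcol j]
  · rw [Finset.sum_comm]
    refine (Finset.sum_congr rfl fun k _ => ?_).symm
    rw [← Finset.sum_mul, hWrow k, one_mul]

theorem stmt4 {m n : ℕ} (S₁ S₂ : Fin n → Finset (Fin m))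
    (M N : Matrix (Fin m) (Fin n) ℝ)
    (hM : ∀ j i, M j i = if j ∈ S₁ i then 1 else 0)
    (hN : ∀ j i, N j i = if j ∈ S₂ i then 1 else 0)
    (hfi : ∃ (Y : Matrix (Fin m) (Fin m) ℝ) (Z : Matrix (Fin n) (Fin n) ℝ),
      (∀ i j, 0 ≤ Y i j) ∧ (∀ i, ∑ j, Y i j = 1) ∧ (∀ j, ∑ i, Y i j = 1) ∧
      (∀ i j, 0 ≤ Z i j) ∧ (∀ i, ∑ j, Z i j = 1) ∧ (∀ j, ∑ i, Z i j = 1) ∧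
      M * Z = Y * N ∧ N * Zᵀ = Yᵀ * M) :
    sSup {r : ℝ | ∃ x : Fin n → ℝ, (∀ i, 0 ≤ x i) ∧
        (∀ j : Fin m, ∑ i ∈ Finset.univ.filter (fun i => j ∈ S₁ i), x i ≤ 1) ∧
        r = ∑ i, x i} =
      sSup {r : ℝ | ∃ x : Fin n → ℝ, (∀ i, 0 ≤ x i) ∧
        (∀ j : Fin m, ∑ i ∈ Finset.univ.filter (fun i => j ∈ S₂ i), x i ≤ 1) ∧
        r = ∑ i, x i} := by
  obtain ⟨Y, Z, hY0, hYrow, hYcol, hZ0, hZrow, hZcol, hMZ, hNZ⟩ := hfi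
  congr 1
  apply Set.Subset.antisymm
  · exact feas_subset_aux S₁ S₂ M N hM hN Y Z hY0 hYcol hZ0 hZrow hNZ
  · refine feas_subset_aux S₂ S₁ N M hN hM Yᵀ Zᵀ (fun i j => hY0 j i)
      (fun j => hYrow j) (fun i j => hZ0 j i) (fun i => hZcol i) ?_
    rw [Matrix.transpose_transpose, Matrix.transpose_transpose]
    exact hMZ
end

section
/- Let G and H be finite simple graphs on the same finite vertex type V with adjacency matrices A and B (over ℝ). If there exists a doubly stochastic matrix X with AX = XB (i.e., G and H are fractionally isomorphic), then the fractional domination numbers of G and H are equal: sInf { Σ_{v ∈ V} y v : y : V → ℝ, y ≥ 0, ∀ u ∈ V, Σ_{v ∈ N_G[u]} y v ≥ 1 } = sInf { Σ_{v ∈ V} y v : y : V → ℝ, y ≥ 0, ∀ u ∈ V, Σ_{v ∈ N_H[u]} y v ≥ 1 }. -/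
open Matrix

private lemma aux_subset {V : Type*} [Fintype V] [DecidableEq V]
    (G H : SimpleGraph V) [DecidableRel G.Adj] [DecidableRel H.Adj]
    (X : Matrix V V ℝ)
    (hX0 : ∀ i j, 0 ≤ X i j) (hXrow : ∀ i, ∑ j, X i j = 1) (hXcol : ∀ j, ∑ i, X i j = 1)
    (hAXB : G.adjMatrix ℝ * X = X * H.adjMatrix ℝ) :
    {r : ℝ | ∃ y : V → ℝ, (∀ v, 0 ≤ y v) ∧
        (∀ u, 1 ≤ ∑ v ∈ insert u (H.neighborFinset u), y v) ∧ r = ∑ v, y v} ⊆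
      {r : ℝ | ∃ y : V → ℝ, (∀ v, 0 ≤ y v) ∧
        (∀ u, 1 ≤ ∑ v ∈ insert u (G.neighborFinset u), y v) ∧ r = ∑ v, y v} := by
  rintro r ⟨y, hy0, hyfeas, rfl⟩
  refine ⟨X *ᵥ y, fun v => Finset.sum_nonneg fun w _ => mul_nonneg (hX0 v w) (hy0 w), ?_, ?_⟩
  · intro u
    rw [Finset.sum_insert (SimpleGraph.notMem_neighborFinset_self G u),
      ← SimpleGraph.adjMatrix_mulVec_apply, Matrix.mulVec_mulVec, hAXB,
      ← Matrix.mulVec_mulVec]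
    have key : (X *ᵥ y) u + (X *ᵥ (H.adjMatrix ℝ *ᵥ y)) u
        = ∑ w, X u w * (y w + (H.adjMatrix ℝ *ᵥ y) w) := by
      simp only [Matrix.mulVec, dotProduct, mul_add, Finset.sum_add_distrib]
    rw [key]
    calc (1 : ℝ) = ∑ w, X u w * 1 := by simp [hXrow u]
      _ ≤ ∑ w, X u w * (y w + (H.adjMatrix ℝ *ᵥ y) w) := by
          apply Finset.sum_le_sum
          intro w _
          apply mul_le_mul_of_nonneg_left _ (hX0 u w)
          have := hyfeas w
          rw [Finset.sum_insert (SimpleGraph.notMem_neighborFinset_self H w)] at this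
          rw [SimpleGraph.adjMatrix_mulVec_apply]
          linarith
  · have : ∑ v, (X *ᵥ y) v = ∑ w, y w := by
      simp only [Matrix.mulVec, dotProduct]
      rw [Finset.sum_comm]
      simp [← Finset.sum_mul, hXcol]
    exact this.symm

theorem stmt5 {V : Type*} [Fintype V] [DecidableEq V]
    (G H : SimpleGraph V) [DecidableRel G.Adj] [DecidableRel H.Adj]
    (X : Matrix V V ℝ)
    (hX0 : ∀ i j, 0 ≤ X i j) (hXrow : ∀ i, ∑ j, X i j = 1) (hXcol : ∀ j, ∑ i, X i j = 1)
    (hAXB : G.adjMatrix ℝ * X = X * H.adjMatrix ℝ) :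
    sInf {r : ℝ | ∃ y : V → ℝ, (∀ v, 0 ≤ y v) ∧
        (∀ u, 1 ≤ ∑ v ∈ insert u (G.neighborFinset u), y v) ∧ r = ∑ v, y v} =
      sInf {r : ℝ | ∃ y : V → ℝ, (∀ v, 0 ≤ y v) ∧
        (∀ u, 1 ≤ ∑ v ∈ insert u (H.neighborFinset u), y v) ∧ r = ∑ v, y v} := by
  have hT : H.adjMatrix ℝ * Xᵀ = Xᵀ * G.adjMatrix ℝ := by
    have := congrArg Matrix.transpose hAXB
    rw [Matrix.transpose_mul, Matrix.transpose_mul, SimpleGraph.transpose_adjMatrix,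
      SimpleGraph.transpose_adjMatrix] at this
    exact this.symm
  refine congrArg sInf (Set.Subset.antisymm ?_ ?_)
  · exact aux_subset H G Xᵀ (fun i j => hX0 j i) (fun i => hXcol i) (fun j => hXrow j) hT
  · exact aux_subset G H X hX0 hXrow hXcol hAXB
end

section
/- Let A and B be symmetric real n×n matrices and suppose X is a doubly stochastic n×n matrix with AX = XB. Then sSup { 𝟙ᵀx : x ∈ ℝ^n, x ≥ 0, A²x ≤ 𝟙 } = sSup { 𝟙ᵀx : x ∈ ℝ^n, x ≥ 0, B²x ≤ 𝟙 }, where 𝟙 is the all-ones vector of dimension n. -/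
open Matrix

lemma stmt6_aux {n : ℕ} (A B : Matrix (Fin n) (Fin n) ℝ)
    (X : Matrix (Fin n) (Fin n) ℝ)
    (hX0 : ∀ i j, 0 ≤ X i j) (hXrow : ∀ i, ∑ j, X i j = 1) (hXcol : ∀ j, ∑ i, X i j = 1)
    (hAXB : A * X = X * B) :
    {r : ℝ | ∃ x : Fin n → ℝ, (∀ i, 0 ≤ x i) ∧ (∀ j, (B * B).mulVec x j ≤ 1) ∧
        r = ∑ i, x i} ⊆
    {r : ℝ | ∃ x : Fin n → ℝ, (∀ i, 0 ≤ x i) ∧ (∀ j, (A * A).mulVec x j ≤ 1) ∧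
        r = ∑ i, x i} := by
  rintro r ⟨x, hx0, hxB, rfl⟩
  refine ⟨X.mulVec x, ?_, ?_, ?_⟩
  · intro i
    simp only [mulVec, dotProduct]
    exact Finset.sum_nonneg fun j _ => mul_nonneg (hX0 i j) (hx0 j)
  · intro j
    have hkey : A * A * X = X * (B * B) := by
      calc A * A * X = A * (X * B) := by rw [mul_assoc, hAXB]
        _ = (X * B) * B := by rw [← mul_assoc, hAXB, mul_assoc]
        _ = X * (B * B) := by rw [mul_assoc]
    have : (A * A).mulVec (X.mulVec x) j = X.mulVec ((B * B).mulVec x) j := by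
      rw [mulVec_mulVec, mulVec_mulVec, hkey]
    rw [this]
    calc X.mulVec ((B * B).mulVec x) j = ∑ k, X j k * (B * B).mulVec x k := rfl
      _ ≤ ∑ k, X j k * 1 :=
        Finset.sum_le_sum fun k _ => mul_le_mul_of_nonneg_left (hxB k) (hX0 j k)
      _ = 1 := by simp [hXrow j]
  · simp only [mulVec, dotProduct]
    rw [Finset.sum_comm]
    refine Finset.sum_congr rfl fun j _ => ?_
    rw [← Finset.sum_mul, hXcol j, one_mul]

theorem stmt6 {n : ℕ} (A B : Matrix (Fin n) (Fin n) ℝ)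
    (hA : Aᵀ = A) (hB : Bᵀ = B)
    (X : Matrix (Fin n) (Fin n) ℝ)
    (hX0 : ∀ i j, 0 ≤ X i j) (hXrow : ∀ i, ∑ j, X i j = 1) (hXcol : ∀ j, ∑ i, X i j = 1)
    (hAXB : A * X = X * B) :
    sSup {r : ℝ | ∃ x : Fin n → ℝ, (∀ i, 0 ≤ x i) ∧ (∀ j, (A * A).mulVec x j ≤ 1) ∧
        r = ∑ i, x i} =
      sSup {r : ℝ | ∃ x : Fin n → ℝ, (∀ i, 0 ≤ x i) ∧ (∀ j, (B * B).mulVec x j ≤ 1) ∧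
        r = ∑ i, x i} := by
  have hBXA : B * Xᵀ = Xᵀ * A := by
    have := congrArg Matrix.transpose hAXB
    rw [transpose_mul, transpose_mul, hA, hB] at this
    exact this.symm
  have h1 := stmt6_aux A B X hX0 hXrow hXcol hAXB
  have h2 := stmt6_aux B A Xᵀ (fun i j => hX0 j i) (fun i => hXcol i) (fun j => hXrow j) hBXA
  have : {r : ℝ | ∃ x : Fin n → ℝ, (∀ i, 0 ≤ x i) ∧ (∀ j, (A * A).mulVec x j ≤ 1) ∧
        r = ∑ i, x i} =
      {r : ℝ | ∃ x : Fin n → ℝ, (∀ i, 0 ≤ x i) ∧ (∀ j, (B * B).mulVec x j ≤ 1) ∧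
        r = ∑ i, x i} := le_antisymm h2 h1
  rw [this]
end

section
/- Let G and H be finite simple graphs on the same finite vertex type V with adjacency matrices A and B (over ℝ). If there exists a doubly stochastic matrix X with AX = XB, then the fractional matching numbers of G and H are equal: sSup { Σ_{e ∈ E(G)} x e : x : E(G) → ℝ, x ≥ 0, ∀ u ∈ V, Σ_{e ∈ E(G), u ∈ e} x e ≤ 1 } = sSup { Σ_{e ∈ E(H)} x e : x : E(H) → ℝ, x ≥ 0, ∀ u ∈ V, Σ_{e ∈ E(H), u ∈ e} x e ≤ 1 }. -/
open Matrix Finset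

set_option linter.unusedSectionVars false
set_option linter.unusedVariables false
set_option maxHeartbeats 1000000

namespace FracIso2

variable {V : Type*} [Fintype V] [DecidableEq V]

/-- Sum over incident edges equals sum over neighbors. -/
lemma sum_inc (G : SimpleGraph V) [DecidableRel G.Adj] (f : Sym2 V → ℝ) (u : V) :
    ∑ e ∈ G.edgeFinset.filter (fun e => u ∈ e), f e
      = ∑ v ∈ G.neighborFinset u, f s(u, v) := by
  refine (Finset.sum_bij' (i := fun v _ => s(u, v))
    (j := fun e he => Sym2.Mem.other' (Finset.mem_filter.mp he).2) ?_ ?_ ?_ ?_ ?_).symm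
  · intro v hv
    rw [Finset.mem_filter]
    refine ⟨?_, Sym2.mem_mk_left u v⟩
    rw [SimpleGraph.mem_edgeFinset, SimpleGraph.mem_edgeSet]
    exact (SimpleGraph.mem_neighborFinset G u v).mp hv
  · intro e he
    have h2 := (Finset.mem_filter.mp he).2
    have h1 := (Finset.mem_filter.mp he).1
    rw [SimpleGraph.mem_neighborFinset]
    rw [← SimpleGraph.mem_edgeSet]
    rw [Sym2.other_spec' h2]
    exact SimpleGraph.mem_edgeFinset.mp h1
  · intro v hv
    exact Sym2.congr_right.mp (Sym2.other_spec' _)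
  · intro e he
    exact Sym2.other_spec' (Finset.mem_filter.mp he).2
  · intro v hv
    rfl


lemma two_sum_edges (G : SimpleGraph V) [DecidableRel G.Adj] (f : Sym2 V → ℝ) :
    ∑ u, ∑ v, (if G.Adj u v then f s(u, v) else 0) = 2 * ∑ e ∈ G.edgeFinset, f e := by
  have h1 : ∀ u : V, ∑ v, (if G.Adj u v then f s(u, v) else 0)
      = ∑ e ∈ G.edgeFinset.filter (fun e => u ∈ e), f e := by
    intro u
    rw [sum_inc, SimpleGraph.neighborFinset_eq_filter, Finset.sum_filter]
  calc ∑ u, ∑ v, (if G.Adj u v then f s(u, v) else 0)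
      = ∑ u, ∑ e ∈ G.edgeFinset.filter (fun e => u ∈ e), f e := by
        exact Finset.sum_congr rfl fun u _ => h1 u
    _ = ∑ u, ∑ e ∈ G.edgeFinset, if u ∈ e then f e else 0 := by
        exact Finset.sum_congr rfl fun u _ => (Finset.sum_filter _ _)
    _ = ∑ e ∈ G.edgeFinset, ∑ u, if u ∈ e then f e else 0 := Finset.sum_comm
    _ = ∑ e ∈ G.edgeFinset, 2 * f e := by
        refine Finset.sum_congr rfl fun e he => ?_
        have hd : ¬ e.IsDiag :=
          G.not_isDiag_of_mem_edgeSet (SimpleGraph.mem_edgeFinset.mp he)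
        induction e with
        | _ a b =>
          have hab : a ≠ b := by simpa using hd
          have : (Finset.univ.filter (fun u => u ∈ s(a, b))) = {a, b} := by
            ext w; simp [Sym2.mem_iff]
          rw [← Finset.sum_filter, this, Finset.sum_pair hab, two_mul]
    _ = 2 * ∑ e ∈ G.edgeFinset, f e := by rw [← Finset.mul_sum]


/-- rows u and v share a column with nonzero entries -/
def Rel (X : Matrix V V ℝ) (u v : V) : Prop := ∃ j, X u j ≠ 0 ∧ X v j ≠ 0

noncomputable def cP (X : Matrix V V ℝ) (u : V) : V :=
  (Quotient.mk (Relation.EqvGen.setoid (Rel X)) u).out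

noncomputable def cQ (X : Matrix V V ℝ) (j : V) : V :=
  if h : ∃ u, X u j ≠ 0 then cP X (Classical.choose h) else j

lemma cP_eq_iff (X : Matrix V V ℝ) (u v : V) :
    cP X u = cP X v ↔ Relation.EqvGen (Rel X) u v := by
  unfold cP
  rw [Quotient.out_inj]
  exact Quotient.eq

lemma cQ_spec (X : Matrix V V ℝ) {u j : V} (h : X u j ≠ 0) : cP X u = cQ X j := by
  have hex : ∃ u, X u j ≠ 0 := ⟨u, h⟩
  rw [cQ, dif_pos hex]
  exact (cP_eq_iff X _ _).mpr
    (Relation.EqvGen.rel _ _ ⟨j, h, Classical.choose_spec hex⟩)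

lemma rowblock (X : Matrix V V ℝ) (hXrow : ∀ i, ∑ j, X i j = 1) (u t : V) :
    ∑ j ∈ Finset.univ.filter (fun j => cQ X j = t), X u j
      = if cP X u = t then 1 else 0 := by
  by_cases h : cP X u = t
  · rw [if_pos h]
    have hnot : ∑ j ∈ Finset.univ.filter (fun j => ¬ cQ X j = t), X u j = 0 := by
      refine Finset.sum_eq_zero fun j hj => ?_
      by_contra hne
      exact (Finset.mem_filter.mp hj).2 ((cQ_spec X hne) ▸ h)
    have := Finset.sum_filter_add_sum_filter_not Finset.univ (fun j => cQ X j = t)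
      (fun j => X u j)
    rw [hnot, add_zero] at this
    rw [this, hXrow]
  · rw [if_neg h]
    refine Finset.sum_eq_zero fun j hj => ?_
    by_contra hne
    exact h ((cQ_spec X hne).trans (Finset.mem_filter.mp hj).2)

lemma colblock (X : Matrix V V ℝ) (hXcol : ∀ j, ∑ i, X i j = 1) (j t : V) :
    ∑ u ∈ Finset.univ.filter (fun u => cP X u = t), X u j
      = if cQ X j = t then 1 else 0 := by
  by_cases h : cQ X j = t
  · rw [if_pos h]
    have hnot : ∑ u ∈ Finset.univ.filter (fun u => ¬ cP X u = t), X u j = 0 := by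
      refine Finset.sum_eq_zero fun u hu => ?_
      by_contra hne
      exact (Finset.mem_filter.mp hu).2 ((cQ_spec X hne).trans h)
    have := Finset.sum_filter_add_sum_filter_not Finset.univ (fun u => cP X u = t)
      (fun u => X u j)
    rw [hnot, add_zero] at this
    rw [this, hXcol]
  · rw [if_neg h]
    refine Finset.sum_eq_zero fun u hu => ?_
    by_contra hne
    exact h (((cQ_spec X hne).symm.trans (Finset.mem_filter.mp hu).2))

lemma card_fiber_eq (X : Matrix V V ℝ) (hXrow : ∀ i, ∑ j, X i j = 1)
    (hXcol : ∀ j, ∑ i, X i j = 1) (s : V) :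
    ((Finset.univ.filter (fun u => cP X u = s)).card : ℝ)
      = (Finset.univ.filter (fun j => cQ X j = s)).card := by
  calc ((Finset.univ.filter (fun u => cP X u = s)).card : ℝ)
      = ∑ u ∈ Finset.univ.filter (fun u => cP X u = s), (1 : ℝ) := by
        rw [Finset.sum_const, nsmul_eq_mul, mul_one]
    _ = ∑ u ∈ Finset.univ.filter (fun u => cP X u = s), ∑ j, X u j := by
        exact Finset.sum_congr rfl fun u _ => (hXrow u).symm
    _ = ∑ j, ∑ u ∈ Finset.univ.filter (fun u => cP X u = s), X u j := Finset.sum_comm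
    _ = ∑ j, if cQ X j = s then (1:ℝ) else 0 := by
        exact Finset.sum_congr rfl fun j _ => colblock X hXcol j s
    _ = (Finset.univ.filter (fun j => cQ X j = s)).card := by
        rw [← Finset.sum_filter, Finset.sum_const, nsmul_eq_mul, mul_one]

section Graphs

variable (G H : SimpleGraph V) [DecidableRel G.Adj] [DecidableRel H.Adj]
variable (X : Matrix V V ℝ)

noncomputable def aval (t u : V) : ℝ :=
  ∑ v ∈ Finset.univ.filter (fun v => cP X v = t), G.adjMatrix ℝ u v

noncomputable def bval (t k : V) : ℝ :=
  ∑ l ∈ Finset.univ.filter (fun l => cQ X l = t), H.adjMatrix ℝ k l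

lemma bval_nonneg (t k : V) : 0 ≤ bval H X t k := by
  refine Finset.sum_nonneg fun l _ => ?_
  simp only [SimpleGraph.adjMatrix_apply]
  positivity

variable {X}

lemma adjsymm (u v : V) : G.adjMatrix ℝ u v = G.adjMatrix ℝ v u := by
  by_cases h : G.Adj u v
  · simp [h, h.symm]
  · have h' : ¬ G.Adj v u := fun hc => h hc.symm
    simp [h, h']

lemma L3 (hXrow : ∀ i, ∑ j, X i j = 1)
    (hAXB : G.adjMatrix ℝ * X = X * H.adjMatrix ℝ) (t u : V) : aval G X t u = ∑ k, X u k * bval H X t k := by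
  have lhs : ∑ j ∈ Finset.univ.filter (fun j => cQ X j = t), (G.adjMatrix ℝ * X) u j
      = aval G X t u := by
    calc ∑ j ∈ Finset.univ.filter (fun j => cQ X j = t), (G.adjMatrix ℝ * X) u j
        = ∑ j ∈ Finset.univ.filter (fun j => cQ X j = t), ∑ l, G.adjMatrix ℝ u l * X l j := by
          exact Finset.sum_congr rfl fun j _ => Matrix.mul_apply
      _ = ∑ l, ∑ j ∈ Finset.univ.filter (fun j => cQ X j = t), G.adjMatrix ℝ u l * X l j :=
          Finset.sum_comm
      _ = ∑ l, G.adjMatrix ℝ u l * (if cP X l = t then 1 else 0) := by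
          refine Finset.sum_congr rfl fun l _ => ?_
          rw [← Finset.mul_sum, rowblock X hXrow]
      _ = ∑ l ∈ Finset.univ.filter (fun l => cP X l = t), G.adjMatrix ℝ u l := by
          rw [Finset.sum_filter]
          exact Finset.sum_congr rfl fun l _ => by rw [mul_ite, mul_one, mul_zero]
      _ = aval G X t u := rfl
  have rhs : ∑ j ∈ Finset.univ.filter (fun j => cQ X j = t), (X * H.adjMatrix ℝ) u j
      = ∑ k, X u k * bval H X t k := by
    calc ∑ j ∈ Finset.univ.filter (fun j => cQ X j = t), (X * H.adjMatrix ℝ) u j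
        = ∑ j ∈ Finset.univ.filter (fun j => cQ X j = t), ∑ k, X u k * H.adjMatrix ℝ k j := by
          exact Finset.sum_congr rfl fun j _ => Matrix.mul_apply
      _ = ∑ k, ∑ j ∈ Finset.univ.filter (fun j => cQ X j = t), X u k * H.adjMatrix ℝ k j :=
          Finset.sum_comm
      _ = ∑ k, X u k * bval H X t k := by
          exact Finset.sum_congr rfl fun k _ => by rw [← Finset.mul_sum]; rfl
  rw [← lhs, hAXB, rhs]

lemma L3' (hXcol : ∀ j, ∑ i, X i j = 1)
    (hAXB : G.adjMatrix ℝ * X = X * H.adjMatrix ℝ) (t k : V) : bval H X t k = ∑ u, X u k * aval G X t u := by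
  have lhs : ∑ v ∈ Finset.univ.filter (fun v => cP X v = t), (G.adjMatrix ℝ * X) v k
      = ∑ u, X u k * aval G X t u := by
    calc ∑ v ∈ Finset.univ.filter (fun v => cP X v = t), (G.adjMatrix ℝ * X) v k
        = ∑ v ∈ Finset.univ.filter (fun v => cP X v = t), ∑ u, G.adjMatrix ℝ v u * X u k := by
          exact Finset.sum_congr rfl fun v _ => Matrix.mul_apply
      _ = ∑ u, ∑ v ∈ Finset.univ.filter (fun v => cP X v = t), G.adjMatrix ℝ v u * X u k :=
          Finset.sum_comm
      _ = ∑ u, X u k * aval G X t u := by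
          refine Finset.sum_congr rfl fun u _ => ?_
          rw [aval, Finset.mul_sum]
          refine Finset.sum_congr rfl fun v _ => ?_
          rw [mul_comm, adjsymm G u v]
  have rhs : ∑ v ∈ Finset.univ.filter (fun v => cP X v = t), (X * H.adjMatrix ℝ) v k
      = bval H X t k := by
    calc ∑ v ∈ Finset.univ.filter (fun v => cP X v = t), (X * H.adjMatrix ℝ) v k
        = ∑ v ∈ Finset.univ.filter (fun v => cP X v = t), ∑ l, X v l * H.adjMatrix ℝ l k := by
          exact Finset.sum_congr rfl fun v _ => Matrix.mul_apply
      _ = ∑ l, ∑ v ∈ Finset.univ.filter (fun v => cP X v = t), X v l * H.adjMatrix ℝ l k :=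
          Finset.sum_comm
      _ = ∑ l, (if cQ X l = t then 1 else 0) * H.adjMatrix ℝ l k := by
          refine Finset.sum_congr rfl fun l _ => ?_
          rw [← Finset.sum_mul, colblock X hXcol]
      _ = ∑ l ∈ Finset.univ.filter (fun l => cQ X l = t), H.adjMatrix ℝ l k := by
          rw [Finset.sum_filter]
          exact Finset.sum_congr rfl fun l _ => by rw [ite_mul, one_mul, zero_mul]
      _ = bval H X t k := by
          exact Finset.sum_congr rfl fun l _ => adjsymm H l k
  rw [← rhs, ← hAXB, lhs]


lemma col_ex (hXcol : ∀ j, ∑ i, X i j = 1) (j : V) : ∃ u, X u j ≠ 0 := by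
  by_contra h
  push_neg at h
  have : ∑ i, X i j = 0 := Finset.sum_eq_zero fun i _ => h i
  rw [hXcol j] at this
  exact one_ne_zero this

lemma cQ_surj (hXcol : ∀ j, ∑ i, X i j = 1) (j : V) :
    ∃ u, cP X u = cQ X j ∧ X u j ≠ 0 := by
  obtain ⟨u, hu⟩ := col_ex hXcol j
  exact ⟨u, cQ_spec X hu, hu⟩

lemma edge_transfer (hX0 : ∀ i j, 0 ≤ X i j) (hXrow : ∀ i, ∑ j, X i j = 1)
    (hAXB : G.adjMatrix ℝ * X = X * H.adjMatrix ℝ) {u v : V} (huv : G.Adj u v) :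
    ∃ k l, cQ X k = cP X u ∧ cQ X l = cP X v ∧ H.Adj k l := by
  have hpos : 0 < aval G X (cP X v) u := by
    refine Finset.sum_pos' (fun w _ => by simp only [SimpleGraph.adjMatrix_apply]; positivity)
      ⟨v, Finset.mem_filter.mpr ⟨Finset.mem_univ v, rfl⟩, by simp [huv]⟩
  rw [L3 G H hXrow hAXB] at hpos
  obtain ⟨k, _, hk⟩ := Finset.exists_ne_zero_of_sum_ne_zero (ne_of_gt hpos)
  have hXuk : X u k ≠ 0 := fun h0 => hk (by rw [h0, zero_mul])
  have hbk : bval H X (cP X v) k ≠ 0 := fun h0 => hk (by rw [h0, mul_zero])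
  obtain ⟨l, hl, hBkl⟩ := Finset.exists_ne_zero_of_sum_ne_zero hbk
  refine ⟨k, l, (cQ_spec X hXuk).symm, (Finset.mem_filter.mp hl).2, ?_⟩
  by_contra hadj
  exact hBkl (by simp [hadj])

lemma bval_const (hX0 : ∀ i j, 0 ≤ X i j) (hXrow : ∀ i, ∑ j, X i j = 1)
    (hXcol : ∀ j, ∑ i, X i j = 1)
    (hAXB : G.adjMatrix ℝ * X = X * H.adjMatrix ℝ) (t : V) {k k' : V}
    (hkk : cQ X k = cQ X k') : bval H X t k = bval H X t k' := by
  set s := cQ X k with hs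
  set a : V → ℝ := aval G X t with ha
  set b : V → ℝ := bval H X t with hb
  -- s is in the range of cP
  obtain ⟨u₀, hu₀, hXu₀⟩ := cQ_surj hXcol k
  -- maximizers
  have hPne : (Finset.univ.filter (fun u => cP X u = s)).Nonempty :=
    ⟨u₀, Finset.mem_filter.mpr ⟨Finset.mem_univ _, hu₀⟩⟩
  have hQne : (Finset.univ.filter (fun j => cQ X j = s)).Nonempty :=
    ⟨k, Finset.mem_filter.mpr ⟨Finset.mem_univ _, rfl⟩⟩
  obtain ⟨us, husmem, husmax⟩ := Finset.exists_max_image _ a hPne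
  obtain ⟨ks, hksmem, hksmax⟩ := Finset.exists_max_image _ b hQne
  have husP : cP X us = s := (Finset.mem_filter.mp husmem).2
  have hksQ : cQ X ks = s := (Finset.mem_filter.mp hksmem).2
  set α := a us with hα
  set β := b ks with hβ
  -- generic bound: a u = convex combo of b over its Q-class
  have haub : ∀ u : V, cP X u = s → a u ≤ β := by
    intro u hu
    rw [ha, L3 G H hXrow hAXB]
    calc ∑ j, X u j * b j ≤ ∑ j, X u j * β := by
          refine Finset.sum_le_sum fun j _ => ?_
          by_cases h0 : X u j = 0
          · rw [h0, zero_mul, zero_mul]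
          · refine mul_le_mul_of_nonneg_left ?_ (hX0 u j)
            exact hksmax j (Finset.mem_filter.mpr ⟨Finset.mem_univ _,
              ((cQ_spec X h0).symm.trans hu)⟩)
      _ = β := by rw [← Finset.sum_mul, hXrow, one_mul]
  have hbka : ∀ j : V, cQ X j = s → b j ≤ α := by
    intro j hj
    rw [hb, L3' G H hXcol hAXB]
    calc ∑ u, X u j * a u ≤ ∑ u, X u j * α := by
          refine Finset.sum_le_sum fun u _ => ?_
          by_cases h0 : X u j = 0
          · rw [h0, zero_mul, zero_mul]
          · refine mul_le_mul_of_nonneg_left ?_ (hX0 u j)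
            exact husmax u (Finset.mem_filter.mpr ⟨Finset.mem_univ _,
              ((cQ_spec X h0).trans hj)⟩)
      _ = α := by rw [← Finset.sum_mul, hXcol, one_mul]
  have hαβ : α = β := le_antisymm (haub us husP) (hbka ks hksQ)
  -- maximizer propagation
  have key_ab : ∀ u : V, cP X u = s → a u = α → ∀ j : V, X u j ≠ 0 → b j = β := by
    intro u hu hau j hXuj
    have hjQ : cQ X j = s := (cQ_spec X hXuj).symm.trans hu
    by_contra hne
    have hlt : b j < β := lt_of_le_of_ne (le_of_le_of_eq (hbka j hjQ) hαβ) hne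
    have hXujpos : 0 < X u j := lt_of_le_of_ne (hX0 u j) (Ne.symm hXuj)
    have hstrict : ∑ j', X u j' * b j' < ∑ j', X u j' * β := by
      refine Finset.sum_lt_sum (fun j' _ => ?_) ⟨j, Finset.mem_univ j, ?_⟩
      · by_cases h0 : X u j' = 0
        · rw [h0, zero_mul, zero_mul]
        · refine mul_le_mul_of_nonneg_left ?_ (hX0 u j')
          exact hksmax j' (Finset.mem_filter.mpr ⟨Finset.mem_univ _,
            ((cQ_spec X h0).symm.trans hu)⟩)
      · exact mul_lt_mul_of_pos_left hlt hXujpos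
    rw [← Finset.sum_mul, hXrow, one_mul] at hstrict
    rw [← L3 G H hXrow hAXB, ← ha] at hstrict
    rw [hau, hαβ] at hstrict
    exact lt_irrefl _ hstrict
  have key_ba : ∀ j : V, cQ X j = s → b j = β → ∀ u : V, X u j ≠ 0 → a u = α := by
    intro j hj hbj u hXuj
    have huP : cP X u = s := (cQ_spec X hXuj).trans hj
    by_contra hne
    have hlt : a u < α := lt_of_le_of_ne (le_of_le_of_eq (haub u huP) hαβ.symm) hne
    have hXujpos : 0 < X u j := lt_of_le_of_ne (hX0 u j) (Ne.symm hXuj)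
    have hstrict : ∑ u', X u' j * a u' < ∑ u', X u' j * α := by
      refine Finset.sum_lt_sum (fun u' _ => ?_) ⟨u, Finset.mem_univ u, ?_⟩
      · by_cases h0 : X u' j = 0
        · rw [h0, zero_mul, zero_mul]
        · refine mul_le_mul_of_nonneg_left ?_ (hX0 u' j)
          exact husmax u' (Finset.mem_filter.mpr ⟨Finset.mem_univ _,
            ((cQ_spec X h0).trans hj)⟩)
      · exact mul_lt_mul_of_pos_left hlt hXujpos
    rw [← Finset.sum_mul, hXcol, one_mul] at hstrict
    rw [← L3' G H hXcol hAXB, ← hb] at hstrict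
    rw [hbj, hαβ] at hstrict
    exact lt_irrefl _ hstrict
  -- propagation along the equivalence
  have propagate : ∀ u v : V, Relation.EqvGen (Rel X) u v →
      (cP X u = s → (a u = α ↔ a v = α)) := by
    intro u v huv
    induction huv with
    | rel u v hr =>
        intro hus
        obtain ⟨j, hXuj, hXvj⟩ := hr
        have hvs : cP X v = s := by
          rw [(cQ_spec X hXvj), ← (cQ_spec X hXuj)]
          exact hus
        constructor
        · intro hau
          have hbj := key_ab u hus hau j hXuj
          exact key_ba j ((cQ_spec X hXuj).symm.trans hus) hbj v hXvj
        · intro hav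
          have hbj := key_ab v hvs hav j hXvj
          exact key_ba j ((cQ_spec X hXvj).symm.trans hvs) hbj u hXuj
    | refl u => exact fun _ => Iff.rfl
    | symm u v huv ih =>
        intro hvs
        have hcp : cP X u = cP X v := (cP_eq_iff X u v).mpr huv
        exact (ih (hcp.trans hvs)).symm
    | trans u v w huv hvw ih1 ih2 =>
        intro hus
        have hcp : cP X u = cP X v := (cP_eq_iff X u v).mpr huv
        exact (ih1 hus).trans (ih2 (hcp.symm.trans hus))
  -- every element of the Q-fiber has b value β
  have final : ∀ j : V, cQ X j = s → b j = β := by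
    intro j hj
    obtain ⟨u₁, hu₁, hXu₁⟩ := cQ_surj hXcol j
    have hu₁s : cP X u₁ = s := hu₁.trans hj
    have heqv : Relation.EqvGen (Rel X) us u₁ :=
      (cP_eq_iff X us u₁).mp (husP.trans hu₁s.symm)
    have hau₁ : a u₁ = α := (propagate us u₁ heqv husP).mp rfl
    exact key_ab u₁ hu₁s hau₁ j hXu₁
  rw [final k rfl, final k' hkk.symm]


variable (X)

/-- matrix form of an edge function -/
noncomputable def Mx (x : Sym2 V → ℝ) : V → V → ℝ :=
  fun u v => if G.Adj u v then x s(u, v) else 0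

noncomputable def wFn (x : Sym2 V → ℝ) : V → V → ℝ := fun s t =>
  ∑ u ∈ Finset.univ.filter (fun u => cP X u = s),
    ∑ v ∈ Finset.univ.filter (fun v => cP X v = t), Mx G x u v

noncomputable def eFn : V → V → ℝ := fun s t =>
  ∑ k ∈ Finset.univ.filter (fun k => cQ X k = s),
    ∑ l ∈ Finset.univ.filter (fun l => cQ X l = t), H.adjMatrix ℝ k l

lemma Mx_symm (x : Sym2 V → ℝ) (u v : V) : Mx G x u v = Mx G x v u := by
  unfold Mx
  by_cases h : G.Adj u v
  · rw [if_pos h, if_pos h.symm, Sym2.eq_swap]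
  · rw [if_neg h, if_neg (fun hc => h hc.symm)]

lemma Mx_nonneg (x : Sym2 V → ℝ) (hx0 : ∀ e ∈ G.edgeFinset, 0 ≤ x e) (u v : V) :
    0 ≤ Mx G x u v := by
  unfold Mx
  by_cases h : G.Adj u v
  · rw [if_pos h]
    exact hx0 _ (SimpleGraph.mem_edgeFinset.mpr h)
  · rw [if_neg h]

lemma Mx_rowsum (x : Sym2 V → ℝ)
    (hx1 : ∀ u : V, ∑ e ∈ G.edgeFinset.filter (fun e => u ∈ e), x e ≤ 1) (u : V) :
    ∑ v, Mx G x u v ≤ 1 := by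
  refine le_trans (le_of_eq ?_) (hx1 u)
  rw [sum_inc, SimpleGraph.neighborFinset_eq_filter, Finset.sum_filter]
  rfl

lemma wFn_symm (x : Sym2 V → ℝ) (s t : V) : wFn G X x s t = wFn G X x t s := by
  unfold wFn
  rw [Finset.sum_comm]
  exact Finset.sum_congr rfl fun v _ => Finset.sum_congr rfl fun u _ => Mx_symm G x u v

lemma eFn_symm (s t : V) : eFn H X s t = eFn H X t s := by
  unfold eFn
  refine Finset.sum_comm.trans ?_
  exact Finset.sum_congr rfl fun l _ => Finset.sum_congr rfl fun k _ => adjsymm H k l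

lemma wFn_nonneg (x : Sym2 V → ℝ) (hx0 : ∀ e ∈ G.edgeFinset, 0 ≤ x e) (s t : V) :
    0 ≤ wFn G X x s t :=
  Finset.sum_nonneg fun u _ => Finset.sum_nonneg fun v _ => Mx_nonneg G x hx0 u v

lemma eFn_nonneg (s t : V) : 0 ≤ eFn H X s t :=
  Finset.sum_nonneg fun k _ => Finset.sum_nonneg fun l _ =>
    by simp only [SimpleGraph.adjMatrix_apply]; positivity

lemma eFn_eq_bval_sum (s t : V) :
    eFn H X s t = ∑ k ∈ Finset.univ.filter (fun k => cQ X k = s), bval H X t k := rfl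

variable {X}

lemma eFn_const (hX0 : ∀ i j, 0 ≤ X i j) (hXrow : ∀ i, ∑ j, X i j = 1)
    (hXcol : ∀ j, ∑ i, X i j = 1)
    (hAXB : G.adjMatrix ℝ * X = X * H.adjMatrix ℝ) (t : V) (k₀ : V) :
    eFn H X (cQ X k₀) t
      = ((Finset.univ.filter (fun k => cQ X k = cQ X k₀)).card : ℝ) * bval H X t k₀ := by
  rw [eFn_eq_bval_sum]
  rw [Finset.sum_congr rfl (fun k hk =>
    bval_const G H hX0 hXrow hXcol hAXB t ((Finset.mem_filter.mp hk).2 : cQ X k = cQ X k₀))]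
  rw [Finset.sum_const, nsmul_eq_mul]

lemma wFn_zero (hX0 : ∀ i j, 0 ≤ X i j) (hXrow : ∀ i, ∑ j, X i j = 1)
    (hAXB : G.adjMatrix ℝ * X = X * H.adjMatrix ℝ)
    (x : Sym2 V → ℝ) (s t : V) (he : eFn H X s t = 0) : wFn G X x s t = 0 := by
  by_contra hw
  obtain ⟨u, hu, hu2⟩ := Finset.exists_ne_zero_of_sum_ne_zero hw
  obtain ⟨v, hv, hv2⟩ := Finset.exists_ne_zero_of_sum_ne_zero hu2
  have hadj : G.Adj u v := by
    by_contra hadj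
    exact hv2 (by unfold Mx; rw [if_neg hadj])
  obtain ⟨k, l, hk, hl, hkl⟩ := edge_transfer G H hX0 hXrow hAXB hadj
  have hepos : 0 < eFn H X s t := by
    unfold eFn
    refine Finset.sum_pos' (fun k' _ => Finset.sum_nonneg fun l' _ =>
      by simp only [SimpleGraph.adjMatrix_apply]; positivity) ?_
    refine ⟨k, Finset.mem_filter.mpr ⟨Finset.mem_univ _, hk.trans (Finset.mem_filter.mp hu).2⟩, ?_⟩
    refine Finset.sum_pos' (fun l' _ => by simp only [SimpleGraph.adjMatrix_apply]; positivity) ?_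
    exact ⟨l, Finset.mem_filter.mpr ⟨Finset.mem_univ _, hl.trans (Finset.mem_filter.mp hv).2⟩,
      by simp [hkl]⟩
  exact (ne_of_gt hepos) he

lemma transport (hX0 : ∀ i j, 0 ≤ X i j) (hXrow : ∀ i, ∑ j, X i j = 1)
    (hXcol : ∀ j, ∑ i, X i j = 1)
    (hAXB : G.adjMatrix ℝ * X = X * H.adjMatrix ℝ)
    (x : Sym2 V → ℝ) (hx0 : ∀ e ∈ G.edgeFinset, 0 ≤ x e)
    (hx1 : ∀ u : V, ∑ e ∈ G.edgeFinset.filter (fun e => u ∈ e), x e ≤ 1) :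
    ∃ y : Sym2 V → ℝ, (∀ e ∈ H.edgeFinset, 0 ≤ y e) ∧
      (∀ u : V, ∑ e ∈ H.edgeFinset.filter (fun e => u ∈ e), y e ≤ 1) ∧
      ∑ e ∈ H.edgeFinset, y e = ∑ e ∈ G.edgeFinset, x e := by
  set q : V → V → ℝ := fun s t => wFn G X x s t / eFn H X s t with hq
  have hqsymm : ∀ k l : V, q (cQ X k) (cQ X l) = q (cQ X l) (cQ X k) := by
    intro k l
    rw [hq]
    simp only
    rw [wFn_symm, eFn_symm]
  refine ⟨Sym2.lift ⟨fun k l => q (cQ X k) (cQ X l), hqsymm⟩, ?_, ?_, ?_⟩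
  · -- nonnegativity
    intro e he
    induction e with
    | _ k l =>
      simp only [Sym2.lift_mk]
      exact div_nonneg (wFn_nonneg G X x hx0 _ _) (eFn_nonneg H X _ _)
  · -- vertex constraints
    intro k₀
    set s₀ := cQ X k₀ with hs₀
    set c : ℝ := ((Finset.univ.filter (fun k => cQ X k = s₀)).card : ℝ) with hc
    have hcpos : 0 < c := by
      rw [hc]
      have : k₀ ∈ Finset.univ.filter (fun k => cQ X k = s₀) :=
        Finset.mem_filter.mpr ⟨Finset.mem_univ _, rfl⟩
      exact_mod_cast Finset.card_pos.mpr ⟨k₀, this⟩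
    have step1 : ∑ e ∈ H.edgeFinset.filter (fun e => k₀ ∈ e),
        Sym2.lift ⟨fun k l => q (cQ X k) (cQ X l), hqsymm⟩ e
        = ∑ l, H.adjMatrix ℝ k₀ l * q s₀ (cQ X l) := by
      rw [sum_inc, SimpleGraph.neighborFinset_eq_filter, Finset.sum_filter]
      refine Finset.sum_congr rfl fun l _ => ?_
      by_cases h : H.Adj k₀ l
      · rw [if_pos h]
        simp [h]
        rfl
      · rw [if_neg h]
        simp [h]
    have step2 : ∑ l, H.adjMatrix ℝ k₀ l * q s₀ (cQ X l)
        = ∑ t, bval H X t k₀ * q s₀ t := by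
      rw [← Finset.sum_fiberwise Finset.univ (fun l => cQ X l)
        (fun l => H.adjMatrix ℝ k₀ l * q s₀ (cQ X l))]
      refine Finset.sum_congr rfl fun t _ => ?_
      rw [Finset.sum_congr rfl (fun l hl => by
        rw [(Finset.mem_filter.mp hl).2]), ← Finset.sum_mul]
      rfl
    have step3 : ∀ t, bval H X t k₀ * q s₀ t ≤ wFn G X x s₀ t / c := by
      intro t
      have hb0 : 0 ≤ bval H X t k₀ := bval_nonneg H X t k₀
      by_cases hb : bval H X t k₀ = 0
      · rw [hb, zero_mul]
        exact div_nonneg (wFn_nonneg G X x hx0 _ _) (le_of_lt hcpos)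
      · have heconst := eFn_const G H hX0 hXrow hXcol hAXB t k₀
        rw [hq]
        simp only
        rw [heconst, ← hc]
        rw [mul_comm, div_mul_eq_mul_div, mul_comm c (bval H X t k₀), ← div_div,
          mul_div_assoc, div_self hb, mul_one]
    have step4 : ∑ t, wFn G X x s₀ t / c ≤ 1 := by
      rw [← Finset.sum_div]
      have hsum : ∑ t, wFn G X x s₀ t
          ≤ ((Finset.univ.filter (fun u => cP X u = s₀)).card : ℝ) := by
        unfold wFn
        rw [Finset.sum_comm]
        calc ∑ u ∈ Finset.univ.filter (fun u => cP X u = s₀),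
              ∑ t, ∑ v ∈ Finset.univ.filter (fun v => cP X v = t), Mx G x u v
            = ∑ u ∈ Finset.univ.filter (fun u => cP X u = s₀), ∑ v, Mx G x u v := by
              refine Finset.sum_congr rfl fun u _ => ?_
              exact Finset.sum_fiberwise Finset.univ (fun v => cP X v) (fun v => Mx G x u v)
          _ ≤ ∑ u ∈ Finset.univ.filter (fun u => cP X u = s₀), 1 :=
              Finset.sum_le_sum fun u _ => Mx_rowsum G x hx1 u
          _ = ((Finset.univ.filter (fun u => cP X u = s₀)).card : ℝ) := by
              rw [Finset.sum_const, nsmul_eq_mul, mul_one]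
      rw [div_le_one hcpos]
      calc ∑ t, wFn G X x s₀ t ≤ _ := hsum
        _ = c := by rw [hc, card_fiber_eq X hXrow hXcol]
    calc ∑ e ∈ H.edgeFinset.filter (fun e => k₀ ∈ e),
          Sym2.lift ⟨fun k l => q (cQ X k) (cQ X l), hqsymm⟩ e
        = ∑ t, bval H X t k₀ * q s₀ t := by rw [step1, step2]
      _ ≤ ∑ t, wFn G X x s₀ t / c := Finset.sum_le_sum fun t _ => step3 t
      _ ≤ 1 := step4
  · -- total value
    have h2H := two_sum_edges H (Sym2.lift ⟨fun k l => q (cQ X k) (cQ X l), hqsymm⟩)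
    have h2G : ∑ u, ∑ v, Mx G x u v = 2 * ∑ e ∈ G.edgeFinset, x e := by
      rw [← two_sum_edges G x]
      rfl
    have lhs_eq : ∑ k, ∑ l, (if H.Adj k l then
        Sym2.lift ⟨fun k l => q (cQ X k) (cQ X l), hqsymm⟩ s(k, l) else 0)
        = ∑ k, ∑ l, H.adjMatrix ℝ k l * q (cQ X k) (cQ X l) := by
      refine Finset.sum_congr rfl fun k _ => Finset.sum_congr rfl fun l _ => ?_
      by_cases h : H.Adj k l
      · rw [if_pos h]; simp [h]
      · rw [if_neg h]; simp [h]
    have fib_eq : ∑ k, ∑ l, H.adjMatrix ℝ k l * q (cQ X k) (cQ X l)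
        = ∑ s, ∑ t, q s t * eFn H X s t := by
      calc ∑ k, ∑ l, H.adjMatrix ℝ k l * q (cQ X k) (cQ X l)
          = ∑ s, ∑ k ∈ Finset.univ.filter (fun k => cQ X k = s),
              ∑ l, H.adjMatrix ℝ k l * q (cQ X k) (cQ X l) :=
            (Finset.sum_fiberwise _ _ _).symm
        _ = ∑ s, ∑ k ∈ Finset.univ.filter (fun k => cQ X k = s),
              ∑ t, ∑ l ∈ Finset.univ.filter (fun l => cQ X l = t),
                H.adjMatrix ℝ k l * q s t := by
            refine Finset.sum_congr rfl fun s _ => Finset.sum_congr rfl fun k hk => ?_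
            rw [← Finset.sum_fiberwise Finset.univ (fun l => cQ X l)
              (fun l => H.adjMatrix ℝ k l * q (cQ X k) (cQ X l))]
            refine Finset.sum_congr rfl fun t _ => Finset.sum_congr rfl fun l hl => ?_
            rw [(Finset.mem_filter.mp hk).2, (Finset.mem_filter.mp hl).2]
        _ = ∑ s, ∑ t, ∑ k ∈ Finset.univ.filter (fun k => cQ X k = s),
              ∑ l ∈ Finset.univ.filter (fun l => cQ X l = t),
                H.adjMatrix ℝ k l * q s t :=
            Finset.sum_congr rfl fun s _ => Finset.sum_comm
        _ = ∑ s, ∑ t, q s t * eFn H X s t := by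
            refine Finset.sum_congr rfl fun s _ => Finset.sum_congr rfl fun t _ => ?_
            unfold eFn
            rw [Finset.mul_sum]
            refine Finset.sum_congr rfl fun k _ => ?_
            rw [Finset.mul_sum]
            exact Finset.sum_congr rfl fun l _ => mul_comm _ _
    have diag : ∀ s t, q s t * eFn H X s t = wFn G X x s t := by
      intro s t
      by_cases he : eFn H X s t = 0
      · rw [he, mul_zero, wFn_zero G H hX0 hXrow hAXB x s t he]
      · rw [hq]
        simp only
        rw [div_mul_cancel₀ _ he]
    have wsum : ∑ s, ∑ t, wFn G X x s t = ∑ u, ∑ v, Mx G x u v := by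
      calc ∑ s, ∑ t, wFn G X x s t
          = ∑ s, ∑ u ∈ Finset.univ.filter (fun u => cP X u = s),
              ∑ t, ∑ v ∈ Finset.univ.filter (fun v => cP X v = t), Mx G x u v := by
            exact Finset.sum_congr rfl fun s _ => Finset.sum_comm
        _ = ∑ s, ∑ u ∈ Finset.univ.filter (fun u => cP X u = s), ∑ v, Mx G x u v := by
            refine Finset.sum_congr rfl fun s _ => Finset.sum_congr rfl fun u _ => ?_
            exact Finset.sum_fiberwise Finset.univ (fun v => cP X v) (fun v => Mx G x u v)
        _ = ∑ u, ∑ v, Mx G x u v :=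
            Finset.sum_fiberwise Finset.univ (fun u => cP X u) (fun u => ∑ v, Mx G x u v)
    have main : 2 * ∑ e ∈ H.edgeFinset,
        Sym2.lift ⟨fun k l => q (cQ X k) (cQ X l), hqsymm⟩ e
        = 2 * ∑ e ∈ G.edgeFinset, x e := by
      rw [← h2H, lhs_eq, fib_eq]
      rw [Finset.sum_congr rfl fun s _ => Finset.sum_congr rfl fun t _ => diag s t]
      rw [wsum, h2G]
    exact mul_left_cancel₀ two_ne_zero main

lemma subset_dir (hX0 : ∀ i j, 0 ≤ X i j) (hXrow : ∀ i, ∑ j, X i j = 1)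
    (hXcol : ∀ j, ∑ i, X i j = 1)
    (hAXB : G.adjMatrix ℝ * X = X * H.adjMatrix ℝ) :
    {r : ℝ | ∃ x : Sym2 V → ℝ, (∀ e ∈ G.edgeFinset, 0 ≤ x e) ∧
        (∀ u : V, ∑ e ∈ G.edgeFinset.filter (fun e => u ∈ e), x e ≤ 1) ∧
        r = ∑ e ∈ G.edgeFinset, x e} ⊆
      {r : ℝ | ∃ x : Sym2 V → ℝ, (∀ e ∈ H.edgeFinset, 0 ≤ x e) ∧
        (∀ u : V, ∑ e ∈ H.edgeFinset.filter (fun e => u ∈ e), x e ≤ 1) ∧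
        r = ∑ e ∈ H.edgeFinset, x e} := by
  rintro r ⟨x, hx0, hx1, rfl⟩
  obtain ⟨y, hy0, hy1, hy2⟩ := transport G H (X := X) hX0 hXrow hXcol hAXB x hx0 hx1
  exact ⟨y, hy0, hy1, hy2.symm⟩

end Graphs
end FracIso2

theorem stmt7 {V : Type*} [Fintype V] [DecidableEq V]
    (G H : SimpleGraph V) [DecidableRel G.Adj] [DecidableRel H.Adj]
    (X : Matrix V V ℝ)
    (hX0 : ∀ i j, 0 ≤ X i j) (hXrow : ∀ i, ∑ j, X i j = 1) (hXcol : ∀ j, ∑ i, X i j = 1)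
    (hAXB : G.adjMatrix ℝ * X = X * H.adjMatrix ℝ) :
    sSup {r : ℝ | ∃ x : Sym2 V → ℝ, (∀ e ∈ G.edgeFinset, 0 ≤ x e) ∧
        (∀ u : V, ∑ e ∈ G.edgeFinset.filter (fun e => u ∈ e), x e ≤ 1) ∧
        r = ∑ e ∈ G.edgeFinset, x e} =
      sSup {r : ℝ | ∃ x : Sym2 V → ℝ, (∀ e ∈ H.edgeFinset, 0 ≤ x e) ∧
        (∀ u : V, ∑ e ∈ H.edgeFinset.filter (fun e => u ∈ e), x e ≤ 1) ∧
        r = ∑ e ∈ H.edgeFinset, x e} := by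
  have hT : H.adjMatrix ℝ * Xᵀ = Xᵀ * G.adjMatrix ℝ := by
    have h := congrArg Matrix.transpose hAXB
    rw [Matrix.transpose_mul, Matrix.transpose_mul, SimpleGraph.transpose_adjMatrix,
      SimpleGraph.transpose_adjMatrix] at h
    exact h.symm
  have h1 := FracIso2.subset_dir G H (X := X) hX0 hXrow hXcol hAXB
  have h2 := FracIso2.subset_dir H G (X := Xᵀ) (fun i j => hX0 j i)
    (fun i => by simpa [Matrix.transpose_apply] using hXcol i)
    (fun j => by simpa [Matrix.transpose_apply] using hXrow j) hT
  rw [subset_antisymm h1 h2]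
end

section
/- Let G be a finite simple graph on vertex set V with a vertex coloring c : V → Fin r, and let F be a finite simple graph. Suppose that for every color type μ (a multiset over Fin r) and all vertices x, y ∈ V with c(x) = c(y), the number of subgraphs S of G with S isomorphic to F, color type μ(S) = μ, and x ∈ V(S) equals the corresponding number for y. Consider the incidence graph G^F on vertex set V ⊕ Sub(F,G), where Sub(F,G) is the set of subgraphs of G isomorphic to F and a left vertex x is adjacent to a right vertex S exactly when x ∈ V(S). Then the partition of V ⊕ Sub(F,G) whose classes are { x ∈ V : c(x) = i } for each i ∈ Fin r together with { S ∈ Sub(F,G) : μ(S) = μ } for each occurring color type μ is an equitable partition of G^F: any two vertices in the same class have equally many neighbors in every class. -/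
/-- The set `Sub(F,G)` of subgraphs of `G` that are isomorphic to `F`, as a subtype. -/
def SubsIso {V W : Type*} (G : SimpleGraph V) (F : SimpleGraph W) : Type _ :=
  {S : G.Subgraph // Nonempty (S.coe ≃g F)}

/-- The color type `μ(S)` of a subgraph `S`: the multiset of colors of its vertices. -/
noncomputable def colorType {V : Type*} [Fintype V] {r : ℕ} (G : SimpleGraph V)
    (c : V → Fin r) (S : G.Subgraph) : Multiset (Fin r) :=
  Multiset.map c S.verts.toFinite.toFinset.val

/-- Adjacency in the incidence graph `G^F` on `V ⊕ Sub(F,G)`: a left vertex `x` is adjacent to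
a right vertex `S` exactly when `x ∈ V(S)`. -/
def incAdj {V W : Type*} (G : SimpleGraph V) (F : SimpleGraph W) :
    V ⊕ SubsIso G F → V ⊕ SubsIso G F → Prop
  | Sum.inl x, Sum.inr S => x ∈ S.1.verts
  | Sum.inr S, Sum.inl x => x ∈ S.1.verts
  | _, _ => False

/-- The partition classes: `{x : c x = i}` for each color `i`, together with
`{S : μ(S) = μ}` for each occurring color type `μ`. -/
def incClasses {V W : Type*} [Fintype V] {r : ℕ} (G : SimpleGraph V) (F : SimpleGraph W)
    (c : V → Fin r) : Set (Set (V ⊕ SubsIso G F)) :=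
  {C | (∃ i : Fin r, C = {w | ∃ x : V, w = Sum.inl x ∧ c x = i}) ∨
       (∃ μ : Multiset (Fin r), (∃ S : SubsIso G F, colorType G c S.1 = μ) ∧
          C = {w | ∃ S : SubsIso G F, w = Sum.inr S ∧ colorType G c S.1 = μ})}

lemma left_nbhd {V W : Type*} [Fintype V] {r : ℕ} (G : SimpleGraph V) (F : SimpleGraph W)
    (c : V → Fin r) (x : V) (μ : Multiset (Fin r)) :
    {w | (∃ S : SubsIso G F, w = Sum.inr S ∧ colorType G c S.1 = μ) ∧ incAdj G F (Sum.inl x) w}.ncard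
      = {S : SubsIso G F | colorType G c S.1 = μ ∧ x ∈ S.1.verts}.ncard := by
  rw [show {w | (∃ S : SubsIso G F, w = Sum.inr S ∧ colorType G c S.1 = μ) ∧ incAdj G F (Sum.inl x) w}
      = Sum.inr '' {S : SubsIso G F | colorType G c S.1 = μ ∧ x ∈ S.1.verts} by
    ext w
    constructor
    · rintro ⟨⟨S, rfl, hS⟩, hadj⟩
      exact ⟨S, ⟨hS, hadj⟩, rfl⟩
    · rintro ⟨S, ⟨hS, hx⟩, rfl⟩
      exact ⟨⟨S, rfl, hS⟩, hx⟩]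
  exact Set.ncard_image_of_injective _ Sum.inr_injective

lemma right_nbhd {V W : Type*} [Fintype V] {r : ℕ} (G : SimpleGraph V) (F : SimpleGraph W)
    (c : V → Fin r) (S : SubsIso G F) (i : Fin r) :
    {w | (∃ x : V, w = Sum.inl x ∧ c x = i) ∧ incAdj G F (Sum.inr S) w}.ncard
      = Multiset.count i (colorType G c S.1) := by
  rw [show {w | (∃ x : V, w = Sum.inl x ∧ c x = i) ∧ incAdj G F (Sum.inr S) w}
      = Sum.inl '' {x : V | c x = i ∧ x ∈ S.1.verts} by
    ext w
    constructor
    · rintro ⟨⟨x, rfl, hx⟩, hadj⟩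
      exact ⟨x, ⟨hx, hadj⟩, rfl⟩
    · rintro ⟨x, ⟨hx, hm⟩, rfl⟩
      exact ⟨⟨x, rfl, hx⟩, hm⟩]
  rw [Set.ncard_image_of_injective _ Sum.inl_injective]
  rw [colorType, Multiset.count_map]
  rw [show {x : V | c x = i ∧ x ∈ S.1.verts}
      = ↑(S.1.verts.toFinite.toFinset.filter (fun x => i = c x)) by
    ext x; simp [Set.Finite.mem_toFinset, eq_comm, and_comm]]
  rw [Set.ncard_coe_finset]
  rfl

theorem stmt8 {V W : Type*} [Fintype V] {r : ℕ} (G : SimpleGraph V) (F : SimpleGraph W)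
    (c : V → Fin r)
    (hcount : ∀ (μ : Multiset (Fin r)) (x y : V), c x = c y →
      {S : SubsIso G F | colorType G c S.1 = μ ∧ x ∈ S.1.verts}.ncard =
        {S : SubsIso G F | colorType G c S.1 = μ ∧ y ∈ S.1.verts}.ncard) :
    ∀ C ∈ incClasses G F c, ∀ D ∈ incClasses G F c, ∀ u ∈ C, ∀ v ∈ C,
      {w | w ∈ D ∧ incAdj G F u w}.ncard = {w | w ∈ D ∧ incAdj G F v w}.ncard := by
  rintro C hC D hD u hu v hv
  rcases hC with ⟨i, rfl⟩ | ⟨μ, _, rfl⟩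
  · obtain ⟨x, rfl, hx⟩ := hu
    obtain ⟨y, rfl, hy⟩ := hv
    rcases hD with ⟨j, rfl⟩ | ⟨ν, _, rfl⟩
    · congr 1
      ext w
      constructor
      · rintro ⟨⟨z, rfl, _⟩, h⟩; exact absurd h (by simp [incAdj])
      · rintro ⟨⟨z, rfl, _⟩, h⟩; exact absurd h (by simp [incAdj])
    · simp only [Set.mem_setOf_eq]
      rw [left_nbhd, left_nbhd]
      exact hcount ν x y (hx.trans hy.symm)
  · obtain ⟨S, rfl, hS⟩ := hu
    obtain ⟨T, rfl, hT⟩ := hv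
    rcases hD with ⟨j, rfl⟩ | ⟨ν, _, rfl⟩
    · simp only [Set.mem_setOf_eq]
      rw [right_nbhd, right_nbhd, hS, hT]
    · congr 1
      ext w
      constructor
      · rintro ⟨⟨U, rfl, _⟩, h⟩; exact absurd h (by simp [incAdj])
      · rintro ⟨⟨U, rfl, _⟩, h⟩; exact absurd h (by simp [incAdj])
end

section
/- Let G and H be finite simple graphs on the same finite vertex type V with adjacency matrices A and B, and suppose there exists a doubly stochastic matrix X with AX = XB. If H has at least one edge, then the matching numbers satisfy 2·ν(G) ≤ 3·ν(H). -/
open Matrix Finset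

namespace Aux10

set_option linter.unusedSectionVars false

variable {V : Type*} [Fintype V] [DecidableEq V]

/-- matching predicate matching the statement -/
def Mat (G : SimpleGraph V) (P : Finset (Sym2 V)) : Prop :=
  ↑P ⊆ G.edgeSet ∧ (∀ e ∈ P, ∀ f ∈ P, e ≠ f → ∀ v : V, ¬(v ∈ e ∧ v ∈ f))

lemma Mat.partner_unique {G : SimpleGraph V} {P : Finset (Sym2 V)} (h : Mat G P)
    {u v w : V} (hv : s(u,v) ∈ P) (hw : s(u,w) ∈ P) : v = w := by
  by_contra hne
  have hef : (s(u,v) : Sym2 V) ≠ s(u,w) := by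
    intro he
    rw [Sym2.eq_iff] at he
    rcases he with ⟨-, rfl⟩ | ⟨rfl, rfl⟩
    · exact hne rfl
    · exact hne rfl
  exact h.2 _ hv _ hw hef u ⟨by simp, by simp⟩

noncomputable def Fm (P : Finset (Sym2 V)) : Matrix V V ℝ :=
  fun u v => if s(u,v) ∈ P then 1 else 0

lemma Fm_nonneg (P : Finset (Sym2 V)) (u v : V) : 0 ≤ Fm P u v := by
  unfold Fm; positivity

lemma Fm_symm (P : Finset (Sym2 V)) (u v : V) : Fm P u v = Fm P v u := by
  unfold Fm; rw [Sym2.eq_swap]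

lemma Fm_rowsum_le {G : SimpleGraph V} {P : Finset (Sym2 V)} (h : Mat G P) (u : V) :
    ∑ v, Fm P u v ≤ 1 := by
  unfold Fm
  rw [Finset.sum_boole]
  norm_cast
  rw [Finset.card_le_one]
  intro a ha b hb
  simp only [mem_filter] at ha hb
  exact h.partner_unique ha.2 hb.2

lemma Fm_le_adj {G : SimpleGraph V} [DecidableRel G.Adj] {P : Finset (Sym2 V)} (h : Mat G P)
    (u v : V) : Fm P u v ≤ G.adjMatrix ℝ u v := by
  unfold Fm
  by_cases hp : s(u,v) ∈ P
  · have : G.Adj u v := (SimpleGraph.mem_edgeSet G).1 (h.1 hp)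
    simp [hp, this]
  · simp only [hp, if_false, SimpleGraph.adjMatrix_apply]
    positivity

lemma pair_fiber_card {a b : V} (hab : a ≠ b) :
    (univ.filter (fun p : V × V => s(p.1, p.2) = s(a,b))).card = 2 := by
  have he : (univ.filter (fun p : V × V => s(p.1, p.2) = s(a,b))) = {(a,b),(b,a)} := by
    ext ⟨u,v⟩
    simp only [mem_filter, mem_univ, true_and, Sym2.eq_iff, mem_insert, mem_singleton,
      Prod.mk.injEq]
  rw [he]
  rw [Finset.card_insert_of_notMem (by simp [Prod.ext_iff]; intro h; exact (hab h).elim)]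
  simp

lemma Fm_total {G : SimpleGraph V} {P : Finset (Sym2 V)} (h : Mat G P) :
    ∑ u, ∑ v, Fm P u v = 2 * P.card := by
  unfold Fm
  rw [← Finset.sum_product']
  rw [Finset.sum_boole]
  have : (univ ×ˢ univ).filter (fun p : V × V => s(p.1, p.2) ∈ P)
      = P.biUnion (fun e => univ.filter (fun p : V × V => s(p.1, p.2) = e)) := by
    ext p
    simp only [mem_filter, mem_biUnion, mem_product, mem_univ, true_and, and_true]
    constructor
    · intro hp; exact ⟨_, hp, rfl⟩
    · rintro ⟨e, he, rfl⟩; exact he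
  rw [this, Finset.card_biUnion]
  · have : ∀ e ∈ P, (univ.filter (fun p : V × V => s(p.1, p.2) = e)).card = 2 := by
      intro e he
      obtain ⟨⟨a, b⟩, rfl⟩ := e.exists_rep
      have hadj : G.Adj a b := (SimpleGraph.mem_edgeSet G).1 (h.1 he)
      exact pair_fiber_card hadj.ne
    rw [Finset.sum_congr rfl this]
    push_cast
    rw [Finset.sum_const]
    ring
  · intro e he f hf hef
    simp only [Finset.disjoint_left, mem_filter]
    rintro p ⟨-, rfl⟩ ⟨-, h2⟩
    exact hef h2



noncomputable def Cov (M : Finset (Sym2 V)) : Finset V :=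
  univ.filter (fun v => ∃ e ∈ M, v ∈ e)

lemma mem_Cov {M : Finset (Sym2 V)} {v : V} : v ∈ Cov M ↔ ∃ e ∈ M, v ∈ e := by
  simp [Cov]

lemma Mat.subset {H : SimpleGraph V} {M P : Finset (Sym2 V)} (hM : Mat H M) (hP : P ⊆ M) :
    Mat H P :=
  ⟨fun e he => hM.1 (hP he), fun e he f hf => hM.2 e (hP he) f (hP hf)⟩

lemma vert_fiber {a b : V} (hab : a ≠ b) :
    (univ.filter (fun v => v ∈ (s(a,b) : Sym2 V))) = {a, b} := by
  ext v; simp [Sym2.mem_iff]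

lemma Cov_eq_biUnion {M : Finset (Sym2 V)} :
    Cov M = M.biUnion (fun e => univ.filter (fun v => v ∈ e)) := by
  ext v; simp [Cov]

lemma Cov_card {H : SimpleGraph V} {M : Finset (Sym2 V)} (hM : Mat H M) :
    (Cov M).card = 2 * M.card := by
  rw [Cov_eq_biUnion, Finset.card_biUnion]
  · have h2 : ∀ e ∈ M, (univ.filter (fun v => v ∈ e)).card = 2 := by
      intro e he
      obtain ⟨⟨a, b⟩, rfl⟩ := e.exists_rep
      have hadj : H.Adj a b := (SimpleGraph.mem_edgeSet H).1 (hM.1 he)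
      rw [vert_fiber hadj.ne, Finset.card_insert_of_notMem (by simp [hadj.ne]), card_singleton]
    rw [Finset.sum_congr rfl h2, Finset.sum_const]
    ring
  · intro e he f hf hef
    simp only [Finset.disjoint_left, mem_filter, mem_univ, true_and]
    intro v hv1 hv2
    exact hM.2 e he f hf hef v ⟨hv1, hv2⟩

lemma insert_uncovered {H : SimpleGraph V} {M : Finset (Sym2 V)} (hM : Mat H M)
    {a b : V} (hab : H.Adj a b) (ha : a ∉ Cov M) (hb : b ∉ Cov M) :
    Mat H (insert s(a,b) M) ∧ (insert s(a,b) M).card = M.card + 1 := by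
  have hnm : (s(a,b) : Sym2 V) ∉ M := fun h => ha (mem_Cov.2 ⟨_, h, by simp⟩)
  refine ⟨⟨?_, ?_⟩, Finset.card_insert_of_notMem hnm⟩
  · intro e he
    rcases Finset.mem_insert.1 (by exact_mod_cast he) with rfl | h
    · exact (SimpleGraph.mem_edgeSet H).2 hab
    · exact hM.1 h
  · intro e he f hf hef v hv
    rcases Finset.mem_insert.1 he with rfl | he'
    · rcases Finset.mem_insert.1 hf with rfl | hf'
      · exact hef rfl
      · rcases Sym2.mem_iff.1 hv.1 with rfl | rfl
        · exact ha (mem_Cov.2 ⟨f, hf', hv.2⟩)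
        · exact hb (mem_Cov.2 ⟨f, hf', hv.2⟩)
    · rcases Finset.mem_insert.1 hf with rfl | hf'
      · rcases Sym2.mem_iff.1 hv.2 with rfl | rfl
        · exact ha (mem_Cov.2 ⟨e, he', hv.1⟩)
        · exact hb (mem_Cov.2 ⟨e, he', hv.1⟩)
      · exact hM.2 e he' f hf' hef v hv

lemma swap_aug {H : SimpleGraph V} {M : Finset (Sym2 V)} (hM : Mat H M)
    (hmax : ∀ M', Mat H M' → M'.card ≤ M.card)
    {a b u u' : V} (he : s(a,b) ∈ M) (hu : u ∉ Cov M) (hu' : u' ∉ Cov M)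
    (huu' : u ≠ u') (hua : H.Adj u a) (hu'b : H.Adj u' b) : False := by
  have hab : H.Adj a b := (SimpleGraph.mem_edgeSet H).1 (hM.1 he)
  set M0 := M.erase s(a,b) with hM0
  have hM0m : Mat H M0 := hM.subset (Finset.erase_subset _ _)
  have hcov0 : ∀ v, v ∉ Cov M → v ∉ Cov M0 := by
    intro v hv hv0
    obtain ⟨e, he0, hve⟩ := mem_Cov.1 hv0
    exact hv (mem_Cov.2 ⟨e, Finset.mem_of_mem_erase he0, hve⟩)
  have hacov : a ∉ Cov M0 := by
    intro h
    obtain ⟨e, he0, hae⟩ := mem_Cov.1 h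
    exact hM.2 _ he _ (Finset.mem_of_mem_erase he0)
      (Ne.symm (Finset.ne_of_mem_erase he0)) a ⟨by simp, hae⟩
  have hbcov : b ∉ Cov M0 := by
    intro h
    obtain ⟨e, he0, hbe⟩ := mem_Cov.1 h
    exact hM.2 _ he _ (Finset.mem_of_mem_erase he0)
      (Ne.symm (Finset.ne_of_mem_erase he0)) b ⟨by simp, hbe⟩
  have hune : u ≠ a ∧ u ≠ b ∧ u' ≠ a ∧ u' ≠ b := by
    refine ⟨?_, ?_, ?_, ?_⟩ <;> rintro rfl
    · exact hu (mem_Cov.2 ⟨_, he, by simp⟩)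
    · exact hu (mem_Cov.2 ⟨_, he, by simp⟩)
    · exact hu' (mem_Cov.2 ⟨_, he, by simp⟩)
    · exact hu' (mem_Cov.2 ⟨_, he, by simp⟩)
  obtain ⟨hM1, hc1⟩ := insert_uncovered hM0m hu'b (hcov0 _ hu') hbcov
  set M1 := insert s(u',b) M0 with hM1d
  have hucov1 : u ∉ Cov M1 := by
    intro h
    obtain ⟨e, he1, hue⟩ := mem_Cov.1 h
    rcases Finset.mem_insert.1 he1 with rfl | he1'
    · rcases Sym2.mem_iff.1 hue with rfl | rfl
      · exact huu' rfl
      · exact hune.2.1 rfl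
    · exact hcov0 _ hu (mem_Cov.2 ⟨e, he1', hue⟩)
  have hacov1 : a ∉ Cov M1 := by
    intro h
    obtain ⟨e, he1, hae⟩ := mem_Cov.1 h
    rcases Finset.mem_insert.1 he1 with rfl | he1'
    · rcases Sym2.mem_iff.1 hae with rfl | rfl
      · exact hune.2.2.1 rfl
      · exact hab.ne rfl
    · exact hacov (mem_Cov.2 ⟨e, he1', hae⟩)
  obtain ⟨hM2, hc2⟩ := insert_uncovered hM1 hua hucov1 hacov1
  have hcard : (insert s(u,a) M1).card = M.card + 1 := by
    rw [hc2, hc1, Finset.card_erase_of_mem he]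
    have : 1 ≤ M.card := Finset.card_pos.2 ⟨_, he⟩
    omega
  have := hmax _ hM2
  omega


lemma charge {H : SimpleGraph V} {M : Finset (Sym2 V)} (hM : Mat H M)
    (hmax : ∀ M', Mat H M' → M'.card ≤ M.card)
    (F' : Matrix V V ℝ) (h0 : ∀ s t, 0 ≤ F' s t) (hadj : ∀ s t, F' s t ≠ 0 → H.Adj s t)
    (hsym : ∀ s t, F' s t = F' t s) (hrs : ∀ t, ∑ s, F' t s ≤ 1) :
    ∑ t, ∑ s, F' t s ≤ 3 * M.card := by
  have hcol : ∀ t, ∑ u, F' u t ≤ 1 := by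
    intro t
    calc ∑ u, F' u t = ∑ u, F' t u := by
          exact Finset.sum_congr rfl fun u _ => (hsym u t)
      _ ≤ 1 := hrs t
  -- split covered / uncovered
  have hsplit : ∑ t, ∑ s, F' t s
      = ∑ t ∈ Cov M, (∑ s, F' t s) + ∑ t ∈ (Cov M)ᶜ, (∑ s, F' t s) :=
    (Finset.sum_add_sum_compl (Cov M) _).symm
  have hpart1 : ∑ t ∈ Cov M, (∑ s, F' t s) ≤ 2 * M.card := by
    calc ∑ t ∈ Cov M, (∑ s, F' t s) ≤ ∑ t ∈ Cov M, (1 : ℝ) :=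
          Finset.sum_le_sum fun t _ => hrs t
      _ = (Cov M).card := by simp
      _ = 2 * M.card := by rw [Cov_card hM]; push_cast; ring
  -- uncovered rows only see covered columns
  have hzero : ∀ u ∈ (Cov M)ᶜ, ∀ s ∈ (Cov M)ᶜ, F' u s = 0 := by
    intro u hu s hs
    by_contra hne
    have hadj' := hadj u s hne
    obtain ⟨hm, hc⟩ := insert_uncovered hM hadj' (Finset.mem_compl.1 hu) (Finset.mem_compl.1 hs)
    have := hmax _ hm
    omega
  have hrow_unc : ∀ u ∈ (Cov M)ᶜ, ∑ s, F' u s = ∑ s ∈ Cov M, F' u s := by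
    intro u hu
    rw [← Finset.sum_add_sum_compl (Cov M) (F' u)]
    have : ∑ s ∈ (Cov M)ᶜ, F' u s = 0 :=
      Finset.sum_eq_zero fun s hs => hzero u hu s hs
    rw [this, add_zero]
  have hpart2 : ∑ t ∈ (Cov M)ᶜ, (∑ s, F' t s) ≤ M.card := by
    have hdisj : ∀ e ∈ M, ∀ f ∈ M, e ≠ f →
        Disjoint (univ.filter (fun v => v ∈ e)) (univ.filter (fun v => v ∈ f)) := by
      intro e he f hf hef
      simp only [Finset.disjoint_left, mem_filter, mem_univ, true_and]
      intro v hv1 hv2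
      exact hM.2 e he f hf hef v ⟨hv1, hv2⟩
    have hone : ∀ e ∈ M, ∑ s ∈ univ.filter (fun v => v ∈ e), ∑ t ∈ (Cov M)ᶜ, F' t s ≤ 1 := by
        intro e he
        obtain ⟨⟨a, b⟩, rfl⟩ := e.exists_rep
        have hab : H.Adj a b := (SimpleGraph.mem_edgeSet H).1 (hM.1 he)
        rw [vert_fiber hab.ne, Finset.sum_pair hab.ne]
        set Na := (Cov M)ᶜ.filter (fun u => F' u a ≠ 0) with hNa
        set Nb := (Cov M)ᶜ.filter (fun u => F' u b ≠ 0) with hNb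
        have hga : ∑ t ∈ (Cov M)ᶜ, F' t a = ∑ t ∈ Na, F' t a := by
          rw [hNa, Finset.sum_filter_ne_zero]
        have hgb : ∑ t ∈ (Cov M)ᶜ, F' t b = ∑ t ∈ Nb, F' t b := by
          rw [hNb, Finset.sum_filter_ne_zero]
        have hkey : ∀ u ∈ Na, ∀ u' ∈ Nb, u = u' := by
          intro u hu u' hu'
          by_contra hne
          simp only [hNa, hNb, Finset.mem_filter, Finset.mem_compl] at hu hu'
          exact swap_aug hM hmax he hu.1 hu'.1 hne (hadj _ _ hu.2) (hadj _ _ hu'.2)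
        by_cases hNae : Na = ∅
        · have : ∑ t ∈ (Cov M)ᶜ, F' t a = 0 := by rw [hga, hNae]; simp
          rw [this, zero_add, hgb]
          calc ∑ t ∈ Nb, F' t b ≤ ∑ t, F' t b :=
                Finset.sum_le_sum_of_subset_of_nonneg (Finset.subset_univ _)
                  (fun t _ _ => h0 t b)
            _ ≤ 1 := hcol b
        · by_cases hNbe : Nb = ∅
          · have : ∑ t ∈ (Cov M)ᶜ, F' t b = 0 := by rw [hgb, hNbe]; simp
            rw [this, add_zero, hga]
            calc ∑ t ∈ Na, F' t a ≤ ∑ t, F' t a :=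
                  Finset.sum_le_sum_of_subset_of_nonneg (Finset.subset_univ _)
                    (fun t _ _ => h0 t a)
              _ ≤ 1 := hcol a
          · obtain ⟨ua, hua⟩ := Finset.nonempty_of_ne_empty hNae
            obtain ⟨ub, hub⟩ := Finset.nonempty_of_ne_empty hNbe
            have huab : ua = ub := hkey _ hua _ hub
            subst huab
            have hsub_a : Na ⊆ {ua} := by
              intro u hu
              rw [Finset.mem_singleton]
              exact hkey _ hu _ hub
            have hsub_b : Nb ⊆ {ua} := by
              intro u hu
              rw [Finset.mem_singleton]
              exact (hkey _ hua _ hu).symm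
            have h1 : ∑ t ∈ Na, F' t a ≤ F' ua a := by
              calc ∑ t ∈ Na, F' t a ≤ ∑ t ∈ {ua}, F' t a :=
                    Finset.sum_le_sum_of_subset_of_nonneg hsub_a (fun t _ _ => h0 t a)
                _ = F' ua a := Finset.sum_singleton _ _
            have h2 : ∑ t ∈ Nb, F' t b ≤ F' ua b := by
              calc ∑ t ∈ Nb, F' t b ≤ ∑ t ∈ {ua}, F' t b :=
                    Finset.sum_le_sum_of_subset_of_nonneg hsub_b (fun t _ _ => h0 t b)
                _ = F' ua b := Finset.sum_singleton _ _
            have h3 : F' ua a + F' ua b ≤ 1 := by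
              calc F' ua a + F' ua b = ∑ s ∈ {a, b}, F' ua s := by
                    rw [Finset.sum_pair hab.ne]
                _ ≤ ∑ s, F' ua s :=
                    Finset.sum_le_sum_of_subset_of_nonneg (Finset.subset_univ _)
                      (fun s _ _ => h0 ua s)
                _ ≤ 1 := hrs ua
            rw [hga, hgb]
            linarith
    set g : V → ℝ := fun s => ∑ t ∈ (Cov M)ᶜ, F' t s with hg
    calc ∑ t ∈ (Cov M)ᶜ, (∑ s, F' t s) = ∑ s ∈ Cov M, g s := by
          rw [Finset.sum_congr rfl hrow_unc, Finset.sum_comm]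
      _ = ∑ e ∈ M, ∑ s ∈ univ.filter (fun v => v ∈ e), g s := by
          rw [Cov_eq_biUnion]; exact Finset.sum_biUnion hdisj
      _ ≤ ∑ _e ∈ M, (1 : ℝ) := Finset.sum_le_sum (fun e he => hone e he)
      _ = M.card := by simp
  rw [hsplit]
  push_cast at hpart1 hpart2 ⊢
  linarith


section Transfer

open scoped Classical

/-- auxiliary relation: columns t, t' of X overlap -/
def rel (X : Matrix V V ℝ) (t t' : V) : Prop := 0 < ∑ u, X u t * X u t'

def sd (X : Matrix V V ℝ) : Setoid V := ⟨Relation.EqvGen (rel X), Relation.EqvGen.is_equivalence _⟩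

noncomputable def qH (X : Matrix V V ℝ) (t : V) : Quotient (sd X) := Quotient.mk (sd X) t

noncomputable def qG (X : Matrix V V ℝ) (u : V) : Quotient (sd X) :=
  if h : ∃ t, 0 < X u t then qH X h.choose else qH X u

noncomputable def Tq (X : Matrix V V ℝ) (q : Quotient (sd X)) : Finset V :=
  univ.filter (fun t => qH X t = q)

noncomputable def Sq (X : Matrix V V ℝ) (q : Quotient (sd X)) : Finset V :=
  univ.filter (fun u => qG X u = q)

noncomputable def oneT (X : Matrix V V ℝ) (q : Quotient (sd X)) : V → ℝ :=
  fun t => if qH X t = q then 1 else 0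

noncomputable def oneS (X : Matrix V V ℝ) (q : Quotient (sd X)) : V → ℝ :=
  fun u => if qG X u = q then 1 else 0

variable {X : Matrix V V ℝ}

lemma sum_Tq (f : V → ℝ) : ∑ j, ∑ t ∈ Tq X j, f t = ∑ t, f t := by
  unfold Tq
  simp only [Finset.sum_filter]
  rw [Finset.sum_comm]
  apply Finset.sum_congr rfl
  intro t _
  simp

lemma sum_Sq (f : V → ℝ) : ∑ j, ∑ u ∈ Sq X j, f u = ∑ u, f u := by
  unfold Sq
  simp only [Finset.sum_filter]
  rw [Finset.sum_comm]
  apply Finset.sum_congr rfl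
  intro t _
  simp

lemma mem_Tq {t : V} {q : Quotient (sd X)} : t ∈ Tq X q ↔ qH X t = q := by
  rw [Tq, Finset.mem_filter]; simp

lemma mem_Sq {u : V} {q : Quotient (sd X)} : u ∈ Sq X q ↔ qG X u = q := by
  rw [Sq, Finset.mem_filter]; simp

lemma qG_eq (hX0 : ∀ i j, 0 ≤ X i j) {u t : V} (h : 0 < X u t) : qG X u = qH X t := by
  have hex : ∃ t, 0 < X u t := ⟨t, h⟩
  rw [qG, dif_pos hex]
  apply Quotient.sound
  apply Relation.EqvGen.rel
  unfold rel
  apply Finset.sum_pos'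
  · intro w _
    exact mul_nonneg (hX0 w _) (hX0 w t)
  · exact ⟨u, Finset.mem_univ u, mul_pos hex.choose_spec h⟩

lemma rowblock_sum (hX0 : ∀ i j, 0 ≤ X i j) (hXrow : ∀ i, ∑ j, X i j = 1)
    (u : V) (q : Quotient (sd X)) :
    ∑ t ∈ Tq X q, X u t = if qG X u = q then 1 else 0 := by
  by_cases hq : qG X u = q
  · rw [if_pos hq, ← hXrow u]
    apply Finset.sum_filter_of_ne
    intro t _ hne
    have hpos : 0 < X u t := lt_of_le_of_ne (hX0 u t) (Ne.symm hne)
    rw [← hq]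
    exact (qG_eq hX0 hpos).symm
  · rw [if_neg hq]
    apply Finset.sum_eq_zero
    intro t ht
    simp only [Tq, Finset.mem_filter] at ht
    by_contra hne
    have hpos : 0 < X u t := lt_of_le_of_ne (hX0 u t) (Ne.symm hne)
    exact hq ((qG_eq hX0 hpos).trans ht.2)

lemma colblock_sum (hX0 : ∀ i j, 0 ≤ X i j) (hXcol : ∀ j, ∑ i, X i j = 1)
    (t : V) (q : Quotient (sd X)) :
    ∑ u ∈ Sq X q, X u t = if qH X t = q then 1 else 0 := by
  by_cases hq : qH X t = q
  · rw [if_pos hq, ← hXcol t]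
    apply Finset.sum_filter_of_ne
    intro u _ hne
    have hpos : 0 < X u t := lt_of_le_of_ne (hX0 u t) (Ne.symm hne)
    rw [← hq]
    exact qG_eq hX0 hpos
  · rw [if_neg hq]
    apply Finset.sum_eq_zero
    intro u hu
    simp only [Sq, Finset.mem_filter] at hu
    by_contra hne
    have hpos : 0 < X u t := lt_of_le_of_ne (hX0 u t) (Ne.symm hne)
    exact hq (((qG_eq hX0 hpos).symm.trans hu.2))

lemma card_Sq_eq (hX0 : ∀ i j, 0 ≤ X i j) (hXrow : ∀ i, ∑ j, X i j = 1)
    (hXcol : ∀ j, ∑ i, X i j = 1) (q : Quotient (sd X)) :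
    ((Sq X q).card : ℝ) = ((Tq X q).card : ℝ) := by
  have h1 : ((Sq X q).card : ℝ) = ∑ u ∈ Sq X q, ∑ t, X u t := by
    rw [Finset.sum_congr rfl (fun u _ => hXrow u)]
    simp
  rw [h1, Finset.sum_comm (f := fun u t => X u t),
    Finset.sum_congr rfl (fun t (_ : t ∈ univ) => colblock_sum hX0 hXcol t q),
    Finset.sum_boole]
  rfl

lemma mulVec_oneT (hX0 : ∀ i j, 0 ≤ X i j) (hXrow : ∀ i, ∑ j, X i j = 1) (q : Quotient (sd X)) :
    X *ᵥ (oneT X q) = oneS X q := by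
  funext u
  show ∑ t, X u t * oneT X q t = oneS X q u
  simp only [oneT, mul_ite, mul_one, mul_zero]
  rw [← Finset.sum_filter]
  exact rowblock_sum hX0 hXrow u q

lemma transpose_mulVec_oneS (hX0 : ∀ i j, 0 ≤ X i j) (hXcol : ∀ j, ∑ i, X i j = 1)
    (q : Quotient (sd X)) :
    Xᵀ *ᵥ (oneS X q) = oneT X q := by
  funext t
  show ∑ u, Xᵀ t u * oneS X q u = oneT X q t
  simp only [Matrix.transpose_apply, oneS, mul_ite, mul_one, mul_zero]
  rw [← Finset.sum_filter]
  exact colblock_sum hX0 hXcol t q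

lemma Ym_apply (t s : V) : (Xᵀ * X) t s = ∑ u, X u t * X u s := by
  simp [Matrix.mul_apply]

lemma Ym_rowsum (hXrow : ∀ i, ∑ j, X i j = 1) (hXcol : ∀ j, ∑ i, X i j = 1) (t : V) :
    ∑ s, (Xᵀ * X) t s = 1 := by
  simp only [Ym_apply]
  rw [Finset.sum_comm]
  calc ∑ u, ∑ s, X u t * X u s = ∑ u, X u t * ∑ s, X u s := by
        simp [Finset.mul_sum]
    _ = ∑ u, X u t := by simp [hXrow]
    _ = 1 := hXcol t

lemma Ym_symm (t s : V) : (Xᵀ * X) t s = (Xᵀ * X) s t := by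
  simp only [Ym_apply]
  exact Finset.sum_congr rfl fun u _ => mul_comm _ _

lemma const_of_fixed (hX0 : ∀ i j, 0 ≤ X i j) (hXrow : ∀ i, ∑ j, X i j = 1)
    (hXcol : ∀ j, ∑ i, X i j = 1) (φ : V → ℝ) (hfix : (Xᵀ * X) *ᵥ φ = φ)
    {t t' : V} (h : qH X t = qH X t') : φ t = φ t' := by
  set Y : Matrix V V ℝ := Xᵀ * X with hY
  have hY0 : ∀ t s, 0 ≤ Y t s := by
    intro t s
    rw [hY, Ym_apply]
    exact Finset.sum_nonneg fun u _ => mul_nonneg (hX0 u t) (hX0 u s)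
  have hfix' : ∀ t, ∑ s, Y t s * φ s = φ t := fun t => congrFun hfix t
  have hrow : ∀ t, ∑ s, Y t s = 1 := Ym_rowsum hXrow hXcol
  have hcolY : ∀ s, ∑ t, Y t s = 1 := by
    intro s
    rw [Finset.sum_congr rfl fun t (_ : t ∈ univ) => Ym_symm t s]
    exact hrow s
  have hquad : ∑ t, ∑ s, Y t s * (φ t - φ s)^2 = 0 := by
    have hexp : ∀ t s, Y t s * (φ t - φ s)^2
        = Y t s * φ t^2 - 2 * (φ t * (Y t s * φ s)) + Y t s * φ s^2 := by
      intro t s; ring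
    calc ∑ t, ∑ s, Y t s * (φ t - φ s)^2
        = ∑ t, ((∑ s, Y t s * φ t^2) - (∑ s, 2 * (φ t * (Y t s * φ s)))
            + ∑ s, Y t s * φ s^2) := by
          apply Finset.sum_congr rfl
          intro t _
          rw [Finset.sum_congr rfl fun s (_ : s ∈ univ) => hexp t s,
            Finset.sum_add_distrib, Finset.sum_sub_distrib]
      _ = ∑ t, ((φ t^2 - 2 * (φ t * φ t)) + ∑ s, Y t s * φ s^2) := by
          apply Finset.sum_congr rfl
          intro t _
          congr 1
          congr 1
          · rw [← Finset.sum_mul, hrow, one_mul]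
          · rw [← Finset.mul_sum, ← Finset.mul_sum, hfix']
      _ = (∑ t, (φ t^2 - 2 * (φ t * φ t))) + ∑ t, ∑ s, Y t s * φ s^2 :=
          Finset.sum_add_distrib
      _ = (∑ t, (φ t^2 - 2 * (φ t * φ t))) + ∑ s, φ s^2 := by
          congr 1
          rw [Finset.sum_comm]
          apply Finset.sum_congr rfl
          intro s _
          rw [← Finset.sum_mul, hcolY, one_mul]
      _ = 0 := by
          have h1 : ∀ t : V, φ t^2 - 2 * (φ t * φ t) = -(φ t^2) := fun t => by ring
          rw [Finset.sum_congr rfl fun t (_ : t ∈ univ) => h1 t]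
          rw [Finset.sum_neg_distrib]
          ring
  have hterm : ∀ t ∈ (univ : Finset V), ∀ s ∈ (univ : Finset V),
      Y t s * (φ t - φ s)^2 = 0 := by
    have houter := (Finset.sum_eq_zero_iff_of_nonneg (fun t _ =>
      Finset.sum_nonneg fun s _ => mul_nonneg (hY0 t s) (sq_nonneg _))).1 hquad
    intro t ht s hs
    exact (Finset.sum_eq_zero_iff_of_nonneg (fun s _ =>
      mul_nonneg (hY0 t s) (sq_nonneg _))).1 (houter t ht) s hs
  have key : ∀ a b : V, rel X a b → φ a = φ b := by
    intro a b hab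
    have h0 : Y a b * (φ a - φ b)^2 = 0 := hterm a (mem_univ a) b (mem_univ b)
    have hpos : 0 < Y a b := by rw [hY, Ym_apply]; exact hab
    have : (φ a - φ b)^2 = 0 := by
      rcases mul_eq_zero.1 h0 with h | h
      · exact absurd h (ne_of_gt hpos)
      · exact h
    have := sq_eq_zero_iff.1 this
    linarith
  have hgen : Relation.EqvGen (rel X) t t' := Quotient.exact h
  clear h
  induction hgen with
  | rel a b hab => exact key a b hab
  | refl a => rfl
  | symm a b _ ih => exact ih.symm
  | trans a b c _ _ ih1 ih2 => exact ih1.trans ih2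

noncomputable def hdeg (X : Matrix V V ℝ) (H : SimpleGraph V) [DecidableRel H.Adj]
    (j : Quotient (sd X)) : V → ℝ := (H.adjMatrix ℝ) *ᵥ (oneT X j)

lemma hdeg_apply (H : SimpleGraph V) [DecidableRel H.Adj] (j : Quotient (sd X)) (t : V) :
    hdeg X H j t = ∑ s ∈ Tq X j, H.adjMatrix ℝ t s := by
  show ∑ s, H.adjMatrix ℝ t s * oneT X j s = _
  simp only [oneT, mul_ite, mul_one, mul_zero]
  rw [← Finset.sum_filter]
  rfl

noncomputable def cst (X : Matrix V V ℝ) (H : SimpleGraph V) [DecidableRel H.Adj]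
    (i j : Quotient (sd X)) : ℝ := hdeg X H j (Quotient.out i)

variable {G H : SimpleGraph V} [DecidableRel G.Adj] [DecidableRel H.Adj]

lemma hdeg_fixed (hX0 : ∀ i j, 0 ≤ X i j) (hXrow : ∀ i, ∑ j, X i j = 1)
    (hXcol : ∀ j, ∑ i, X i j = 1) (hAXB : G.adjMatrix ℝ * X = X * H.adjMatrix ℝ)
    (j : Quotient (sd X)) :
    (Xᵀ * X) *ᵥ (hdeg X H j) = hdeg X H j := by
  have hBX : Xᵀ * G.adjMatrix ℝ = H.adjMatrix ℝ * Xᵀ := by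
    have h := congrArg Matrix.transpose hAXB
    rwa [Matrix.transpose_mul, Matrix.transpose_mul, SimpleGraph.transpose_adjMatrix,
      SimpleGraph.transpose_adjMatrix] at h
  unfold hdeg
  calc (Xᵀ * X) *ᵥ (H.adjMatrix ℝ *ᵥ oneT X j)
      = Xᵀ *ᵥ (X *ᵥ (H.adjMatrix ℝ *ᵥ oneT X j)) := (Matrix.mulVec_mulVec _ _ _).symm
    _ = Xᵀ *ᵥ ((X * H.adjMatrix ℝ) *ᵥ oneT X j) :=
        congrArg (Xᵀ *ᵥ ·) (Matrix.mulVec_mulVec _ _ _)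
    _ = Xᵀ *ᵥ ((G.adjMatrix ℝ * X) *ᵥ oneT X j) := by rw [hAXB]
    _ = Xᵀ *ᵥ (G.adjMatrix ℝ *ᵥ (X *ᵥ oneT X j)) :=
        congrArg (Xᵀ *ᵥ ·) (Matrix.mulVec_mulVec _ _ _).symm
    _ = Xᵀ *ᵥ (G.adjMatrix ℝ *ᵥ oneS X j) := by rw [mulVec_oneT hX0 hXrow]
    _ = (Xᵀ * G.adjMatrix ℝ) *ᵥ oneS X j := Matrix.mulVec_mulVec _ _ _
    _ = (H.adjMatrix ℝ * Xᵀ) *ᵥ oneS X j := by rw [hBX]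
    _ = H.adjMatrix ℝ *ᵥ (Xᵀ *ᵥ oneS X j) := (Matrix.mulVec_mulVec _ _ _).symm
    _ = H.adjMatrix ℝ *ᵥ oneT X j := by rw [transpose_mulVec_oneS hX0 hXcol]

lemma qH_out (i : Quotient (sd X)) : qH X (Quotient.out i) = i := Quotient.out_eq i

lemma hdeg_const (hX0 : ∀ i j, 0 ≤ X i j) (hXrow : ∀ i, ∑ j, X i j = 1)
    (hXcol : ∀ j, ∑ i, X i j = 1) (hAXB : G.adjMatrix ℝ * X = X * H.adjMatrix ℝ)
    {i j : Quotient (sd X)} {t : V} (ht : qH X t = i) :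
    hdeg X H j t = cst X H i j := by
  apply const_of_fixed hX0 hXrow hXcol _ (hdeg_fixed hX0 hXrow hXcol hAXB j)
  rw [ht, qH_out]

lemma Ablock (hX0 : ∀ i j, 0 ≤ X i j) (hXrow : ∀ i, ∑ j, X i j = 1)
    (hXcol : ∀ j, ∑ i, X i j = 1) (hAXB : G.adjMatrix ℝ * X = X * H.adjMatrix ℝ)
    (u : V) (j : Quotient (sd X)) :
    ∑ v ∈ Sq X j, G.adjMatrix ℝ u v = cst X H (qG X u) j := by
  have h1 : ∑ v ∈ Sq X j, G.adjMatrix ℝ u v = (G.adjMatrix ℝ *ᵥ oneS X j) u := by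
    show _ = ∑ v, G.adjMatrix ℝ u v * oneS X j v
    simp only [oneS, mul_ite, mul_one, mul_zero]
    rw [← Finset.sum_filter]
    rfl
  have h2 : G.adjMatrix ℝ *ᵥ oneS X j = X *ᵥ hdeg X H j := by
    rw [← mulVec_oneT hX0 hXrow, Matrix.mulVec_mulVec, hAXB, ← Matrix.mulVec_mulVec]
    rfl
  rw [h1, h2]
  show ∑ t, X u t * hdeg X H j t = _
  have h3 : ∀ t, X u t * hdeg X H j t = X u t * cst X H (qG X u) j := by
    intro t
    rcases eq_or_lt_of_le (hX0 u t) with h | h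
    · rw [← h, zero_mul, zero_mul]
    · rw [hdeg_const hX0 hXrow hXcol hAXB (qG_eq hX0 h).symm]
  rw [Finset.sum_congr rfl fun t _ => h3 t, ← Finset.sum_mul, hXrow, one_mul]

noncomputable def EB (X : Matrix V V ℝ) (H : SimpleGraph V) [DecidableRel H.Adj]
    (i j : Quotient (sd X)) : ℝ := ∑ s ∈ Tq X i, hdeg X H j s

noncomputable def BF (X : Matrix V V ℝ) (P : Finset (Sym2 V)) (i j : Quotient (sd X)) : ℝ :=
  ∑ u ∈ Sq X i, ∑ v ∈ Sq X j, Fm P u v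

noncomputable def FF (X : Matrix V V ℝ) (H : SimpleGraph V) [DecidableRel H.Adj]
    (P : Finset (Sym2 V)) : Matrix V V ℝ :=
  fun s t => H.adjMatrix ℝ s t * (BF X P (qH X s) (qH X t) / EB X H (qH X s) (qH X t))

lemma FF_apply (P : Finset (Sym2 V)) (s t : V) :
    FF X H P s t
      = H.adjMatrix ℝ s t * (BF X P (qH X s) (qH X t) / EB X H (qH X s) (qH X t)) := rfl

lemma Tq_nonempty (i : Quotient (sd X)) : (Tq X i).Nonempty :=
  ⟨Quotient.out i, by rw [Tq, Finset.mem_filter]; exact ⟨mem_univ _, qH_out i⟩⟩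

lemma Tq_card_pos (i : Quotient (sd X)) : 0 < ((Tq X i).card : ℝ) := by
  exact_mod_cast Finset.card_pos.2 (Tq_nonempty i)

lemma EB_eq (hX0 : ∀ i j, 0 ≤ X i j) (hXrow : ∀ i, ∑ j, X i j = 1)
    (hXcol : ∀ j, ∑ i, X i j = 1) (hAXB : G.adjMatrix ℝ * X = X * H.adjMatrix ℝ)
    (i j : Quotient (sd X)) :
    EB X H i j = (Tq X i).card * cst X H i j := by
  unfold EB
  rw [Finset.sum_congr rfl (fun t ht =>
    hdeg_const hX0 hXrow hXcol hAXB (mem_Tq.1 ht))]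
  rw [Finset.sum_const, nsmul_eq_mul]

lemma EB_nonneg (i j : Quotient (sd X)) : 0 ≤ EB X H i j := by
  apply Finset.sum_nonneg
  intro s _
  rw [hdeg_apply]
  apply Finset.sum_nonneg
  intro t _
  simp only [SimpleGraph.adjMatrix_apply]
  positivity

lemma EB_symm (i j : Quotient (sd X)) : EB X H i j = EB X H j i := by
  unfold EB
  simp only [hdeg_apply]
  rw [Finset.sum_comm (f := fun x s => H.adjMatrix ℝ x s)]
  apply Finset.sum_congr rfl
  intro s _
  apply Finset.sum_congr rfl
  intro t _
  simp [SimpleGraph.adjMatrix_apply, SimpleGraph.adj_comm]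

lemma BF_symm (P : Finset (Sym2 V)) (i j : Quotient (sd X)) : BF X P i j = BF X P j i := by
  unfold BF
  rw [Finset.sum_comm (f := fun u v => Fm P u v)]
  exact Finset.sum_congr rfl fun v _ => Finset.sum_congr rfl fun u _ => Fm_symm P u v

lemma BF_nonneg (P : Finset (Sym2 V)) (i j : Quotient (sd X)) : 0 ≤ BF X P i j :=
  Finset.sum_nonneg fun u _ => Finset.sum_nonneg fun v _ => Fm_nonneg P u v

lemma Ablocksum (hX0 : ∀ i j, 0 ≤ X i j) (hXrow : ∀ i, ∑ j, X i j = 1)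
    (hXcol : ∀ j, ∑ i, X i j = 1) (hAXB : G.adjMatrix ℝ * X = X * H.adjMatrix ℝ)
    (i j : Quotient (sd X)) :
    ∑ u ∈ Sq X i, ∑ v ∈ Sq X j, G.adjMatrix ℝ u v = (Sq X i).card * cst X H i j := by
  rw [Finset.sum_congr rfl (fun u hu => by
    rw [Ablock hX0 hXrow hXcol hAXB u j, mem_Sq.1 hu])]
  rw [Finset.sum_const, nsmul_eq_mul]

lemma BF_zero {P : Finset (Sym2 V)} (hP : Mat G P)
    (hX0 : ∀ i j, 0 ≤ X i j) (hXrow : ∀ i, ∑ j, X i j = 1)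
    (hXcol : ∀ j, ∑ i, X i j = 1) (hAXB : G.adjMatrix ℝ * X = X * H.adjMatrix ℝ)
    {i j : Quotient (sd X)} (hEB : EB X H i j = 0) : BF X P i j = 0 := by
  have hc : cst X H i j = 0 := by
    have := EB_eq hX0 hXrow hXcol hAXB i j (G := G)
    rw [hEB] at this
    have hpos := Tq_card_pos (X := X) i
    rcases mul_eq_zero.1 this.symm with h | h
    · exact absurd h (ne_of_gt hpos)
    · exact h
  have hA : ∑ u ∈ Sq X i, ∑ v ∈ Sq X j, G.adjMatrix ℝ u v = 0 := by
    rw [Ablocksum hX0 hXrow hXcol hAXB i j, hc, mul_zero]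
  have hle : BF X P i j ≤ 0 := by
    rw [← hA]
    exact Finset.sum_le_sum fun u _ => Finset.sum_le_sum fun v _ => Fm_le_adj hP u v
  exact le_antisymm hle (BF_nonneg P i j)

lemma FF_rowblock {P : Finset (Sym2 V)} (t : V) (j : Quotient (sd X)) :
    ∑ s ∈ Tq X j, FF X H P t s
      = hdeg X H j t * (BF X P (qH X t) j / EB X H (qH X t) j) := by
  rw [hdeg_apply, Finset.sum_mul]
  apply Finset.sum_congr rfl
  intro s hs
  rw [FF_apply, mem_Tq.1 hs]

lemma FF_rowsum {P : Finset (Sym2 V)} (hP : Mat G P)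
    (hX0 : ∀ i j, 0 ≤ X i j) (hXrow : ∀ i, ∑ j, X i j = 1)
    (hXcol : ∀ j, ∑ i, X i j = 1) (hAXB : G.adjMatrix ℝ * X = X * H.adjMatrix ℝ)
    (t : V) : ∑ s, FF X H P t s ≤ 1 := by
  set i := qH X t with hi
  have hcard := Tq_card_pos (X := X) i
  have h2 : ∀ j, hdeg X H j t * (BF X P i j / EB X H i j)
      ≤ BF X P i j / (Tq X i).card := by
    intro j
    by_cases hEB : EB X H i j = 0
    · rw [hEB, div_zero, mul_zero, BF_zero hP hX0 hXrow hXcol hAXB hEB, zero_div]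
    · have hc : hdeg X H j t = cst X H i j := hdeg_const hX0 hXrow hXcol hAXB hi.symm
      have hEBeq := EB_eq hX0 hXrow hXcol hAXB i j (G := G)
      have hcstval : cst X H i j = EB X H i j / (Tq X i).card := by
        rw [hEBeq]
        field_simp
      rw [hc, hcstval]
      apply le_of_eq
      rw [div_mul_div_comm, mul_comm (EB X H i j) (BF X P i j), mul_div_mul_right _ _ hEB]
  calc ∑ s, FF X H P t s = ∑ j, ∑ s ∈ Tq X j, FF X H P t s := (sum_Tq _).symm
    _ = ∑ j, hdeg X H j t * (BF X P i j / EB X H i j) :=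
        Finset.sum_congr rfl fun j _ => FF_rowblock t j
    _ ≤ ∑ j, BF X P i j / (Tq X i).card := Finset.sum_le_sum fun j _ => h2 j
    _ = (∑ j, BF X P i j) / (Tq X i).card := by rw [← Finset.sum_div]
    _ ≤ 1 := by
        rw [div_le_one hcard]
        have hswap : ∑ j, BF X P i j = ∑ u ∈ Sq X i, ∑ v, Fm P u v := by
          unfold BF
          rw [Finset.sum_comm]
          exact Finset.sum_congr rfl fun u _ => sum_Sq _
        rw [hswap, ← card_Sq_eq hX0 hXrow hXcol i]
        calc ∑ u ∈ Sq X i, ∑ v, Fm P u v ≤ ∑ u ∈ Sq X i, (1:ℝ) :=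
              Finset.sum_le_sum fun u _ => Fm_rowsum_le hP u
          _ = (Sq X i).card := by simp

lemma FF_total {P : Finset (Sym2 V)} (hP : Mat G P)
    (hX0 : ∀ i j, 0 ≤ X i j) (hXrow : ∀ i, ∑ j, X i j = 1)
    (hXcol : ∀ j, ∑ i, X i j = 1) (hAXB : G.adjMatrix ℝ * X = X * H.adjMatrix ℝ) :
    ∑ t, ∑ s, FF X H P t s = 2 * P.card := by
  have h1 : ∀ i j : Quotient (sd X), ∑ t ∈ Tq X i, ∑ s ∈ Tq X j, FF X H P t s
      = BF X P i j := by
    intro i j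
    have : ∀ t ∈ Tq X i, ∑ s ∈ Tq X j, FF X H P t s
        = hdeg X H j t * (BF X P i j / EB X H i j) := by
      intro t ht
      rw [FF_rowblock t j, mem_Tq.1 ht]
    rw [Finset.sum_congr rfl this, ← Finset.sum_mul]
    show EB X H i j * (BF X P i j / EB X H i j) = BF X P i j
    by_cases hEB : EB X H i j = 0
    · rw [hEB, zero_mul, BF_zero hP hX0 hXrow hXcol hAXB hEB]
    · field_simp
  calc ∑ t, ∑ s, FF X H P t s = ∑ i, ∑ t ∈ Tq X i, ∑ s, FF X H P t s := (sum_Tq _).symm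
    _ = ∑ i, ∑ t ∈ Tq X i, ∑ j, ∑ s ∈ Tq X j, FF X H P t s := by
        apply Finset.sum_congr rfl
        intro i _
        exact Finset.sum_congr rfl fun t _ => (sum_Tq _).symm
    _ = ∑ i, ∑ j, ∑ t ∈ Tq X i, ∑ s ∈ Tq X j, FF X H P t s := by
        apply Finset.sum_congr rfl
        intro i _
        exact Finset.sum_comm
    _ = ∑ i, ∑ j, BF X P i j := by
        apply Finset.sum_congr rfl
        intro i _
        exact Finset.sum_congr rfl fun j _ => h1 i j
    _ = ∑ u, ∑ v, Fm P u v := by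
        rw [← sum_Sq (X := X) (fun u => ∑ v, Fm P u v)]
        apply Finset.sum_congr rfl
        intro i _
        unfold BF
        rw [Finset.sum_comm]
        apply Finset.sum_congr rfl
        intro u _
        exact sum_Sq _
    _ = 2 * P.card := Fm_total hP

lemma FF_nonneg (P : Finset (Sym2 V)) (s t : V) : 0 ≤ FF X H P s t := by
  rw [FF_apply]
  have h1 := BF_nonneg (X := X) P (qH X s) (qH X t)
  have h2 := EB_nonneg (H := H) (X := X) (qH X s) (qH X t)
  have h3 : (0:ℝ) ≤ H.adjMatrix ℝ s t := by
    simp only [SimpleGraph.adjMatrix_apply]; positivity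
  positivity

lemma FF_adj (P : Finset (Sym2 V)) (s t : V) (h : FF X H P s t ≠ 0) : H.Adj s t := by
  by_contra hadj
  apply h
  rw [FF_apply]
  simp [SimpleGraph.adjMatrix_apply, hadj]

lemma FF_symm (P : Finset (Sym2 V)) (s t : V) : FF X H P s t = FF X H P t s := by
  rw [FF_apply, FF_apply, BF_symm, EB_symm]
  congr 1
  simp [SimpleGraph.adjMatrix_apply, SimpleGraph.adj_comm]

end Transfer

end Aux10

open Aux10 in
theorem stmt10 {V : Type*} [Fintype V] [DecidableEq V]
    (G H : SimpleGraph V) [DecidableRel G.Adj] [DecidableRel H.Adj]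
    (X : Matrix V V ℝ)
    (hX0 : ∀ i j, 0 ≤ X i j) (hXrow : ∀ i, ∑ j, X i j = 1) (hXcol : ∀ j, ∑ i, X i j = 1)
    (hAXB : G.adjMatrix ℝ * X = X * H.adjMatrix ℝ)
    (hH : H.edgeSet.Nonempty) :
    2 * sSup {k : ℕ | ∃ P : Finset (Sym2 V), ↑P ⊆ G.edgeSet ∧
        (∀ e ∈ P, ∀ f ∈ P, e ≠ f → ∀ v : V, ¬(v ∈ e ∧ v ∈ f)) ∧ P.card = k} ≤
      3 * sSup {k : ℕ | ∃ P : Finset (Sym2 V), ↑P ⊆ H.edgeSet ∧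
        (∀ e ∈ P, ∀ f ∈ P, e ≠ f → ∀ v : V, ¬(v ∈ e ∧ v ∈ f)) ∧ P.card = k} := by
  classical
  set SG := {k : ℕ | ∃ P : Finset (Sym2 V), ↑P ⊆ G.edgeSet ∧
        (∀ e ∈ P, ∀ f ∈ P, e ≠ f → ∀ v : V, ¬(v ∈ e ∧ v ∈ f)) ∧ P.card = k} with hSGdef
  set SH := {k : ℕ | ∃ P : Finset (Sym2 V), ↑P ⊆ H.edgeSet ∧
        (∀ e ∈ P, ∀ f ∈ P, e ≠ f → ∀ v : V, ¬(v ∈ e ∧ v ∈ f)) ∧ P.card = k} with hSHdef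
  have hG0 : (0:ℕ) ∈ SG := ⟨∅, by simp, by simp, rfl⟩
  have hH0 : (0:ℕ) ∈ SH := ⟨∅, by simp, by simp, rfl⟩
  have hbddG : BddAbove SG := by
    refine ⟨Fintype.card (Sym2 V), fun k hk => ?_⟩
    obtain ⟨P, _, _, hc⟩ := hk
    exact hc ▸ Finset.card_le_univ P
  have hbddH : BddAbove SH := by
    refine ⟨Fintype.card (Sym2 V), fun k hk => ?_⟩
    obtain ⟨P, _, _, hc⟩ := hk
    exact hc ▸ Finset.card_le_univ P
  obtain ⟨PG, hPG1, hPG2, hPGc⟩ := Nat.sSup_mem ⟨0, hG0⟩ hbddG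
  obtain ⟨M, hM1, hM2, hMc⟩ := Nat.sSup_mem ⟨0, hH0⟩ hbddH
  have hPG : Mat G PG := ⟨hPG1, hPG2⟩
  have hM : Mat H M := ⟨hM1, hM2⟩
  have hmax : ∀ M', Mat H M' → M'.card ≤ M.card := by
    intro M' hM'
    rw [hMc]
    exact le_csSup hbddH ⟨M', hM'.1, hM'.2, rfl⟩
  have h1 : ∑ t, ∑ s, FF X H PG t s = 2 * PG.card :=
    FF_total hPG hX0 hXrow hXcol hAXB
  have h2 : ∑ t, ∑ s, FF X H PG t s ≤ 3 * M.card :=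
    charge hM hmax (FF X H PG) (FF_nonneg PG) (FF_adj PG) (FF_symm PG)
      (FF_rowsum hPG hX0 hXrow hXcol hAXB)
  have h3 : (2 * PG.card : ℝ) ≤ 3 * M.card := h1 ▸ h2
  rw [← hPGc, ← hMc]
  exact_mod_cast h3
end

section
/- Let S be the Shrikhande graph: the simple graph on ZMod 4 × ZMod 4 in which (i,j) and (i',j') are adjacent iff (i',j') − (i,j) ∈ {(1,0), (−1,0), (0,1), (0,−1), (1,1), (−1,−1)}. Then the maximum number of pairwise edge-disjoint triangles in S equals 16; moreover the 16 triangles { (i,j), (i+1,j), (i+1,j+1) } for (i,j) ∈ ZMod 4 × ZMod 4 partition the edge set of S. -/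
set_option maxRecDepth 10000

/-- The Shrikhande graph: `(i,j)` and `(i',j')` are adjacent iff their difference lies in
`{±(1,0), ±(0,1), ±(1,1)}` in `ZMod 4 × ZMod 4`. -/
def shrikhande : SimpleGraph (ZMod 4 × ZMod 4) where
  Adj a b := b - a ∈ ({((1 : ZMod 4), (0 : ZMod 4)), (-1, 0), (0, 1), (0, -1), (1, 1), (-1, -1)} :
    Finset (ZMod 4 × ZMod 4))
  symm := by constructor; decide
  loopless := by constructor; decide

/-- The edge set of a triangle `t` inside a graph `G`: the edges of `G` with both
endpoints in `t`. -/
def triEdges {V : Type*} (G : SimpleGraph V) (t : Finset V) : Set (Sym2 V) :=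
  {e | e ∈ G.edgeSet ∧ ∀ v ∈ e, v ∈ t}

/-- The triangle `{(i,j), (i+1,j), (i+1,j+1)}` of the Shrikhande graph at the point `(i,j)`. -/
def shriTri (p : ZMod 4 × ZMod 4) : Finset (ZMod 4 × ZMod 4) :=
  {p, p + (1, 0), p + (1, 1)}

instance : DecidableRel shrikhande.Adj := fun _ _ => Finset.decidableMem _ _

private lemma card3 {V : Type*} [DecidableEq V] (G : SimpleGraph V) [DecidableRel G.Adj]
    [Fintype V] {a b c : V} (hab : G.Adj a b) (hac : G.Adj a c) (hbc : G.Adj b c) :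
    (G.edgeFinset.filter (fun e => ∀ v ∈ e, v ∈ ({a,b,c} : Finset V))).card = 3 := by
  have hab' := G.ne_of_adj hab
  have hac' := G.ne_of_adj hac
  have hbc' := G.ne_of_adj hbc
  have hba := G.adj_symm hab
  have hca := G.adj_symm hac
  have hcb := G.adj_symm hbc
  have h : (G.edgeFinset.filter (fun e => ∀ v ∈ e, v ∈ ({a,b,c} : Finset V)))
      = {s(a,b), s(a,c), s(b,c)} := by
    ext e
    induction e with
    | h x y =>
      simp only [Finset.mem_filter, SimpleGraph.mem_edgeFinset, SimpleGraph.mem_edgeSet,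
        Sym2.mem_iff, Finset.mem_insert, Finset.mem_singleton, Sym2.eq_iff]
      constructor
      · rintro ⟨hxy, h⟩
        have hx := h x (Or.inl rfl)
        have hy := h y (Or.inr rfl)
        have hne := G.ne_of_adj hxy
        rcases hx with rfl | rfl | rfl <;> rcases hy with rfl | rfl | rfl <;> tauto
      · rintro ((⟨rfl, rfl⟩ | ⟨rfl, rfl⟩) | (⟨rfl, rfl⟩ | ⟨rfl, rfl⟩) |
          (⟨rfl, rfl⟩ | ⟨rfl, rfl⟩)) <;>
          exact ⟨by assumption, by intro v hv; rcases hv with rfl | rfl <;> tauto⟩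
  rw [h, Finset.card_insert_of_notMem, Finset.card_insert_of_notMem, Finset.card_singleton]
  · simp only [Finset.mem_singleton, Sym2.eq_iff]; tauto
  · simp only [Finset.mem_insert, Finset.mem_singleton, Sym2.eq_iff]; tauto

private lemma shriClique : ∀ p : ZMod 4 × ZMod 4, shrikhande.IsNClique 3 (shriTri p) := by
  intro p
  rw [SimpleGraph.isNClique_iff]
  refine ⟨?_, ?_⟩
  · rw [SimpleGraph.isClique_iff]; revert p; decide
  · revert p; decide

private lemma shriDisjAux : ∀ p q : ZMod 4 × ZMod 4, p ≠ q → ∀ x ∈ shriTri p, ∀ y ∈ shriTri p,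
    shrikhande.Adj x y → ¬(x ∈ shriTri q ∧ y ∈ shriTri q) := by decide

private lemma shriDisj : ∀ p q : ZMod 4 × ZMod 4, p ≠ q →
    Disjoint (triEdges shrikhande (shriTri p)) (triEdges shrikhande (shriTri q)) := by
  intro p q hpq
  rw [Set.disjoint_left]
  intro e he1 he2
  induction e with
  | h x y =>
    obtain ⟨ha1, hm1⟩ := he1
    obtain ⟨ha2, hm2⟩ := he2
    exact shriDisjAux p q hpq x (hm1 x (Sym2.mem_mk_left x y)) y (hm1 y (Sym2.mem_mk_right x y))
      ha1 ⟨hm2 x (Sym2.mem_mk_left x y), hm2 y (Sym2.mem_mk_right x y)⟩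

private lemma shriUnion :
    (⋃ p : ZMod 4 × ZMod 4, triEdges shrikhande (shriTri p)) = shrikhande.edgeSet := by
  ext e
  induction e with
  | h x y =>
    simp only [Set.mem_iUnion, triEdges, Set.mem_setOf_eq, SimpleGraph.mem_edgeSet, Sym2.mem_iff]
    revert x y
    decide

theorem stmt12 :
    sSup {k : ℕ | ∃ P : Finset (Finset (ZMod 4 × ZMod 4)),
        (∀ t ∈ P, shrikhande.IsNClique 3 t) ∧
        (∀ t₁ ∈ P, ∀ t₂ ∈ P, t₁ ≠ t₂ →
          Disjoint (triEdges shrikhande t₁) (triEdges shrikhande t₂)) ∧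
        P.card = k} = 16 ∧
    (∀ p : ZMod 4 × ZMod 4, shrikhande.IsNClique 3 (shriTri p)) ∧
    (⋃ p : ZMod 4 × ZMod 4, triEdges shrikhande (shriTri p)) = shrikhande.edgeSet ∧
    (∀ p q : ZMod 4 × ZMod 4, p ≠ q →
      Disjoint (triEdges shrikhande (shriTri p)) (triEdges shrikhande (shriTri q))) := by
  refine ⟨?_, shriClique, shriUnion, shriDisj⟩
  set S := {k : ℕ | ∃ P : Finset (Finset (ZMod 4 × ZMod 4)),
        (∀ t ∈ P, shrikhande.IsNClique 3 t) ∧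
        (∀ t₁ ∈ P, ∀ t₂ ∈ P, t₁ ≠ t₂ →
          Disjoint (triEdges shrikhande t₁) (triEdges shrikhande t₂)) ∧
        P.card = k} with hS
  have hinj : Function.Injective shriTri := by
    intro p q h
    by_contra hne
    revert h
    revert hne
    revert p q
    decide
  have hmem : (16 : ℕ) ∈ S := by
    refine ⟨Finset.univ.image shriTri, ?_, ?_, ?_⟩
    · intro t ht
      obtain ⟨p, _, rfl⟩ := Finset.mem_image.mp ht
      exact shriClique p
    · intro t₁ ht₁ t₂ ht₂ hne
      obtain ⟨p, _, rfl⟩ := Finset.mem_image.mp ht₁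
      obtain ⟨q, _, rfl⟩ := Finset.mem_image.mp ht₂
      exact shriDisj p q (fun h => hne (congrArg shriTri h))
    · rw [Finset.card_image_of_injective _ hinj]
      decide
  have hub : ∀ k ∈ S, k ≤ 16 := by
    rintro k ⟨P, h1, h2, rfl⟩
    set F := fun t : Finset (ZMod 4 × ZMod 4) =>
      shrikhande.edgeFinset.filter (fun e => ∀ v ∈ e, v ∈ t) with hF
    have hdisj : ∀ t₁ ∈ P, ∀ t₂ ∈ P, t₁ ≠ t₂ → Disjoint (F t₁) (F t₂) := by
      intro t₁ ht₁ t₂ ht₂ hne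
      rw [Finset.disjoint_left]
      intro e he1 he2
      rw [hF, Finset.mem_filter, SimpleGraph.mem_edgeFinset] at he1 he2
      exact Set.disjoint_left.mp (h2 t₁ ht₁ t₂ ht₂ hne) ⟨he1.1, he1.2⟩ ⟨he2.1, he2.2⟩
    have hcard : ∀ t ∈ P, (F t).card = 3 := by
      intro t ht
      obtain ⟨hcl, hc3⟩ := h1 t ht
      obtain ⟨a, b, c, hab, hac, hbc, rfl⟩ := Finset.card_eq_three.mp hc3
      have hAab : shrikhande.Adj a b := hcl (by simp) (by simp) hab
      have hAac : shrikhande.Adj a c := hcl (by simp) (by simp) hac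
      have hAbc : shrikhande.Adj b c := hcl (by simp) (by simp) hbc
      exact card3 shrikhande hAab hAac hAbc
    have hsub : P.biUnion F ⊆ shrikhande.edgeFinset := by
      intro e he
      obtain ⟨t, _, het⟩ := Finset.mem_biUnion.mp he
      exact (Finset.mem_filter.mp het).1
    have h48 : shrikhande.edgeFinset.card = 48 := by decide
    have := Finset.card_le_card hsub
    rw [Finset.card_biUnion hdisj, Finset.sum_congr rfl hcard, Finset.sum_const,
      smul_eq_mul, h48] at this
    omega
  exact le_antisymm (csSup_le ⟨16, hmem⟩ hub) (le_csSup ⟨16, hub⟩ hmem)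
end

section
/- Let G be a finite simple graph and k a natural number. Suppose G has the k-extension property: for every two disjoint finite sets of vertices X and Y with |X| + |Y| ≤ k, there exists a vertex z ∉ X ∪ Y that is adjacent to every vertex of X and to no vertex of Y. Then every dominating set of G has more than k vertices, i.e., the domination number γ(G) > k. -/
theorem stmt17 {V : Type*} [Fintype V] [DecidableEq V] (G : SimpleGraph V) (k : ℕ)
    (hext : ∀ X Y : Finset V, Disjoint X Y → X.card + Y.card ≤ k →
      ∃ z : V, z ∉ X ∧ z ∉ Y ∧ (∀ x ∈ X, G.Adj z x) ∧ (∀ y ∈ Y, ¬ G.Adj z y)) :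
    ∀ D : Finset V, (∀ v : V, v ∈ D ∨ ∃ u ∈ D, G.Adj v u) → k < D.card := by
  intro D hD
  by_contra h
  push_neg at h
  obtain ⟨z, -, hzD, -, hno⟩ := hext ∅ D (Finset.disjoint_empty_left D) (by simpa using h)
  rcases hD z with hz | ⟨u, hu, hadj⟩
  · exact hzD hz
  · exact hno u hu hadj
end
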